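/- arXiv:1710.08681 — 6 statements merged into one kernel-verified Lean document; each statement's English description precedes it below -/
import Mathlib

section
/- Let A : Ω_A → L(H) be an observable on a finite-dimensional complex Hilbert space and (M, P, J) a minimal Naimark dilation of A, with least disturbing channel Λ_A(ρ) = ∑_{j∈Ω_A} P(j) J ρ J* P(j). If B ∈ L(M) is positive semidefinite and Λ_A*(B) = 0, then B = 0. -/
open scoped ComplexOrder

noncomputable section

/-- A positive semidefinite operator on a finite-dimensional complex Hilbert space. -/
def IsPosOp {E : Type*} [NormedAddCommGroup E] [InnerProductSpace ℂ E]
    [FiniteDimensional ℂ E] (T : E →ₗ[ℂ] E) : Prop :=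
  LinearMap.adjoint T = T ∧ ∀ x : E, 0 ≤ (inner ℂ (T x) x : ℂ)

/-- An orthogonal projection: a self-adjoint idempotent operator. -/
def IsOrthoProj {E : Type*} [NormedAddCommGroup E] [InnerProductSpace ℂ E]
    [FiniteDimensional ℂ E] (P : E →ₗ[ℂ] E) : Prop :=
  LinearMap.adjoint P = P ∧ P ∘ₗ P = P

/-- A discrete observable (POVM) with finite outcome set `Ω`. -/
def IsPOVM {E : Type*} [NormedAddCommGroup E] [InnerProductSpace ℂ E]
    [FiniteDimensional ℂ E] {Ω : Type*} [Fintype Ω] (A : Ω → E →ₗ[ℂ] E) : Prop :=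
  (∀ j, IsPosOp (A j)) ∧ ∑ j, A j = (1 : E →ₗ[ℂ] E)

/-- A projection-valued measure (PVM). -/
def IsPVM {E : Type*} [NormedAddCommGroup E] [InnerProductSpace ℂ E]
    [FiniteDimensional ℂ E] {Ω : Type*} [Fintype Ω] (P : Ω → E →ₗ[ℂ] E) : Prop :=
  (∀ j, IsOrthoProj (P j)) ∧ ∑ j, P j = (1 : E →ₗ[ℂ] E)

/-- An isometry between inner product spaces: `J* J = 1`. -/
def IsIsometryOp {E F : Type*} [NormedAddCommGroup E] [InnerProductSpace ℂ E]
    [FiniteDimensional ℂ E] [NormedAddCommGroup F] [InnerProductSpace ℂ F]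
    [FiniteDimensional ℂ F] (J : E →ₗ[ℂ] F) : Prop :=
  LinearMap.adjoint J ∘ₗ J = (1 : E →ₗ[ℂ] E)

/-- `(F, P, J)` is a Naimark dilation of the observable `A`. -/
def IsNaimark {E F : Type*} [NormedAddCommGroup E] [InnerProductSpace ℂ E]
    [FiniteDimensional ℂ E] [NormedAddCommGroup F] [InnerProductSpace ℂ F]
    [FiniteDimensional ℂ F] {Ω : Type*} [Fintype Ω]
    (A : Ω → E →ₗ[ℂ] E) (P : Ω → F →ₗ[ℂ] F) (J : E →ₗ[ℂ] F) : Prop :=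
  IsPVM P ∧ IsIsometryOp J ∧ ∀ j, A j = LinearMap.adjoint J ∘ₗ P j ∘ₗ J

/-- A minimal Naimark dilation: the vectors `P j (J φ)` span the dilation space. -/
def IsMinimalNaimark {E F : Type*} [NormedAddCommGroup E] [InnerProductSpace ℂ E]
    [FiniteDimensional ℂ E] [NormedAddCommGroup F] [InnerProductSpace ℂ F]
    [FiniteDimensional ℂ F] {Ω : Type*} [Fintype Ω]
    (A : Ω → E →ₗ[ℂ] E) (P : Ω → F →ₗ[ℂ] F) (J : E →ₗ[ℂ] F) : Prop :=
  IsNaimark A P J ∧ Submodule.span ℂ {x : F | ∃ j φ, x = P j (J φ)} = ⊤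

/-- The sandwich map `σ ↦ U ∘ σ ∘ V` as a linear map on operators. -/
def sandwich {E F : Type*} [NormedAddCommGroup E] [InnerProductSpace ℂ E]
    [NormedAddCommGroup F] [InnerProductSpace ℂ F]
    (U : E →ₗ[ℂ] F) (V : F →ₗ[ℂ] E) : (E →ₗ[ℂ] E) →ₗ[ℂ] (F →ₗ[ℂ] F) where
  toFun σ := U ∘ₗ σ ∘ₗ V
  map_add' σ τ := by
    ext x; simp [LinearMap.add_comp, LinearMap.comp_add]
  map_smul' c σ := by
    ext x; simp

/-- The least disturbing channel `ρ ↦ ∑ j, P j J ρ J* P j` associated with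
a Naimark dilation `(F, P, J)`. -/
def leastDisturbing {E F : Type*} [NormedAddCommGroup E] [InnerProductSpace ℂ E]
    [FiniteDimensional ℂ E] [NormedAddCommGroup F] [InnerProductSpace ℂ F]
    [FiniteDimensional ℂ F] {Ω : Type*} [Fintype Ω]
    (P : Ω → F →ₗ[ℂ] F) (J : E →ₗ[ℂ] F) : (E →ₗ[ℂ] E) →ₗ[ℂ] (F →ₗ[ℂ] F) :=
  ∑ j, sandwich (P j ∘ₗ J) (LinearMap.adjoint J ∘ₗ P j)

/-- The Lüders channel `σ ↦ ∑ j, P j σ P j` of a PVM `P`. -/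
def ludersChannel {F : Type*} [NormedAddCommGroup F] [InnerProductSpace ℂ F]
    {Ω : Type*} [Fintype Ω] (P : Ω → F →ₗ[ℂ] F) : (F →ₗ[ℂ] F) →ₗ[ℂ] (F →ₗ[ℂ] F) :=
  ∑ j, sandwich (P j) (P j)

/-- Complete positivity of a map on operators, expressed through the existence of
a Kraus decomposition (equivalent to complete positivity in finite dimension). -/
def IsCPMap {E F : Type*} [NormedAddCommGroup E] [InnerProductSpace ℂ E]
    [FiniteDimensional ℂ E] [NormedAddCommGroup F] [InnerProductSpace ℂ F]
    [FiniteDimensional ℂ F] (Λ : (E →ₗ[ℂ] E) →ₗ[ℂ] (F →ₗ[ℂ] F)) : Prop :=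
  ∃ (n : ℕ) (V : Fin n → (E →ₗ[ℂ] F)),
    ∀ ρ, Λ ρ = ∑ i, V i ∘ₗ ρ ∘ₗ LinearMap.adjoint (V i)

/-- A quantum channel: a completely positive trace-preserving linear map. -/
def IsChannel {E F : Type*} [NormedAddCommGroup E] [InnerProductSpace ℂ E]
    [FiniteDimensional ℂ E] [NormedAddCommGroup F] [InnerProductSpace ℂ F]
    [FiniteDimensional ℂ F] (Λ : (E →ₗ[ℂ] E) →ₗ[ℂ] (F →ₗ[ℂ] F)) : Prop :=
  IsCPMap Λ ∧ ∀ ρ, LinearMap.trace ℂ F (Λ ρ) = LinearMap.trace ℂ E ρ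

/-- `Λd` is the Heisenberg dual of `Λ`: `tr[Λ(ρ) B] = tr[ρ Λd(B)]` for all `ρ, B`. -/
def IsHeisenbergDual {E F : Type*} [NormedAddCommGroup E] [InnerProductSpace ℂ E]
    [FiniteDimensional ℂ E] [NormedAddCommGroup F] [InnerProductSpace ℂ F]
    [FiniteDimensional ℂ F] (Λ : (E →ₗ[ℂ] E) →ₗ[ℂ] (F →ₗ[ℂ] F))
    (Λd : (F →ₗ[ℂ] F) →ₗ[ℂ] (E →ₗ[ℂ] E)) : Prop :=
  ∀ ρ B, LinearMap.trace ℂ F (Λ ρ ∘ₗ B) = LinearMap.trace ℂ E (ρ ∘ₗ Λd B)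

/-- Channel post-processing: `Λ₀ ⪯ Λ` iff `Λ₀ = Γ ∘ Λ` for some channel `Γ`. -/
def ChanPP {E F G : Type*} [NormedAddCommGroup E] [InnerProductSpace ℂ E]
    [FiniteDimensional ℂ E] [NormedAddCommGroup F] [InnerProductSpace ℂ F]
    [FiniteDimensional ℂ F] [NormedAddCommGroup G] [InnerProductSpace ℂ G]
    [FiniteDimensional ℂ G]
    (Λ₀ : (E →ₗ[ℂ] E) →ₗ[ℂ] (G →ₗ[ℂ] G)) (Λ : (E →ₗ[ℂ] E) →ₗ[ℂ] (F →ₗ[ℂ] F)) : Prop :=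
  ∃ Γ : (F →ₗ[ℂ] F) →ₗ[ℂ] (G →ₗ[ℂ] G), IsChannel Γ ∧ Λ₀ = Γ ∘ₗ Λ

/-- Post-processing equivalence of channels. -/
def ChanEquiv {E F G : Type*} [NormedAddCommGroup E] [InnerProductSpace ℂ E]
    [FiniteDimensional ℂ E] [NormedAddCommGroup F] [InnerProductSpace ℂ F]
    [FiniteDimensional ℂ F] [NormedAddCommGroup G] [InnerProductSpace ℂ G]
    [FiniteDimensional ℂ G]
    (Λ₀ : (E →ₗ[ℂ] E) →ₗ[ℂ] (G →ₗ[ℂ] G)) (Λ : (E →ₗ[ℂ] E) →ₗ[ℂ] (F →ₗ[ℂ] F)) : Prop :=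
  ChanPP Λ₀ Λ ∧ ChanPP Λ Λ₀

/-- Observable post-processing: `B ⪯ A` via a stochastic matrix `p`. -/
def ObsPP {E : Type*} [NormedAddCommGroup E] [InnerProductSpace ℂ E]
    [FiniteDimensional ℂ E] {Ω₁ Ω₂ : Type*} [Fintype Ω₁] [Fintype Ω₂]
    (B : Ω₂ → E →ₗ[ℂ] E) (A : Ω₁ → E →ₗ[ℂ] E) : Prop :=
  ∃ p : Ω₂ → Ω₁ → ℝ, (∀ k j, 0 ≤ p k j) ∧ (∀ j, ∑ k, p k j = 1) ∧
    ∀ k, B k = ∑ j, (p k j : ℂ) • A j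

/-- Post-processing equivalence of observables. -/
def ObsEquiv {E : Type*} [NormedAddCommGroup E] [InnerProductSpace ℂ E]
    [FiniteDimensional ℂ E] {Ω₁ Ω₂ : Type*} [Fintype Ω₁] [Fintype Ω₂]
    (B : Ω₂ → E →ₗ[ℂ] E) (A : Ω₁ → E →ₗ[ℂ] E) : Prop :=
  ObsPP B A ∧ ObsPP A B

/-- `B` is a relabeling of `A` (along some function `f` on outcomes). -/
def IsRelabeling {E : Type*} [NormedAddCommGroup E] [InnerProductSpace ℂ E]
    [FiniteDimensional ℂ E] {Ω₁ Ω₂ : Type*} [Fintype Ω₁] [Fintype Ω₂] [DecidableEq Ω₂]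
    (B : Ω₂ → E →ₗ[ℂ] E) (A : Ω₁ → E →ₗ[ℂ] E) : Prop :=
  ∃ f : Ω₁ → Ω₂, ∀ k, B k = ∑ j ∈ Finset.univ.filter (fun j => f j = k), A j

/-- A minimally sufficient observable: every observable post-processing
equivalent to it is a refinement of it (i.e. it is a relabeling of every such observable). -/
def MinSufficient {E : Type*} [NormedAddCommGroup E] [InnerProductSpace ℂ E]
    [FiniteDimensional ℂ E] {Ω : Type*} [Fintype Ω] [DecidableEq Ω]
    (A : Ω → E →ₗ[ℂ] E) : Prop :=
  ∀ (Ω' : Type) (_ : Fintype Ω') (B : Ω' → E →ₗ[ℂ] E),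
    IsPOVM B → ObsEquiv B A → IsRelabeling A B

/-- Compatibility of an observable `A` and a channel `Λ`: there is an instrument
with the outcome statistics of `A` whose total channel is `Λ`. -/
def CompatObsChan {E F : Type*} [NormedAddCommGroup E] [InnerProductSpace ℂ E]
    [FiniteDimensional ℂ E] [NormedAddCommGroup F] [InnerProductSpace ℂ F]
    [FiniteDimensional ℂ F] {Ω : Type*} [Fintype Ω]
    (A : Ω → E →ₗ[ℂ] E) (Λ : (E →ₗ[ℂ] E) →ₗ[ℂ] (F →ₗ[ℂ] F)) : Prop :=
  ∃ I : Ω → ((E →ₗ[ℂ] E) →ₗ[ℂ] (F →ₗ[ℂ] F)),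
    (∀ j, IsCPMap (I j)) ∧
    (∀ j ρ, LinearMap.trace ℂ F (I j ρ) = LinearMap.trace ℂ E (ρ ∘ₗ A j)) ∧
    ∑ j, I j = Λ

/-- Joint measurability (compatibility) of two observables. -/
def JointlyMeasurable {E : Type*} [NormedAddCommGroup E] [InnerProductSpace ℂ E]
    [FiniteDimensional ℂ E] {Ω₁ Ω₂ : Type*} [Fintype Ω₁] [Fintype Ω₂]
    (A : Ω₁ → E →ₗ[ℂ] E) (B : Ω₂ → E →ₗ[ℂ] E) : Prop :=
  ∃ G : Ω₁ × Ω₂ → E →ₗ[ℂ] E, IsPOVM G ∧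
    (∀ j, A j = ∑ k, G (j, k)) ∧ (∀ k, B k = ∑ j, G (j, k))

/-- An extreme observable: an extreme point of the convex set of observables
with the given outcome set. -/
def IsExtremeObs {E : Type*} [NormedAddCommGroup E] [InnerProductSpace ℂ E]
    [FiniteDimensional ℂ E] {Ω : Type*} [Fintype Ω] (A : Ω → E →ₗ[ℂ] E) : Prop :=
  IsPOVM A ∧ ∀ (B₁ B₂ : Ω → E →ₗ[ℂ] E) (t : ℝ), IsPOVM B₁ → IsPOVM B₂ →
    0 < t → t < 1 → (∀ j, A j = (t : ℂ) • B₁ j + ((1 - t : ℝ) : ℂ) • B₂ j) →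
    (B₁ = A ∧ B₂ = A)

/-- `|x⟩⟨y|` : the rank-one operator `z ↦ ⟨y, z⟩ x`. -/
def outer {E : Type*} [NormedAddCommGroup E] [InnerProductSpace ℂ E] (x y : E) :
    E →ₗ[ℂ] E where
  toFun z := (inner ℂ y z : ℂ) • x
  map_add' z w := by simp [inner_add_right, add_smul]
  map_smul' c z := by simp [inner_smul_right, smul_smul]

/-- Loewner order on operators: `S ≤ T` iff `T - S` is positive semidefinite. -/
def LoewnerLE {E : Type*} [NormedAddCommGroup E] [InnerProductSpace ℂ E]
    [FiniteDimensional ℂ E] (S T : E →ₗ[ℂ] E) : Prop :=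
  IsPosOp (T - S)

/-- Compression of an operator `T` on `F` to a subspace `S`: `P_S ∘ T ∘ incl_S`. -/
def compressTo {F : Type*} [NormedAddCommGroup F] [InnerProductSpace ℂ F]
    [FiniteDimensional ℂ F] (S : Submodule ℂ F) (T : F →ₗ[ℂ] F) : ↥S →ₗ[ℂ] ↥S :=
  have := FiniteDimensional.complete ℂ ↥S
  S.orthogonalProjectionOnto.toLinearMap ∘ₗ T ∘ₗ S.subtype

end

/-!
Testing `Λ_A*(B) = 0` against the pure state `|φ⟩⟨φ|` gives
`∑ j, ⟪P j (J φ), B (P j (J φ))⟫ = 0`. Every summand is nonnegative, so each vanishes, and for a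
positive `B` this forces `B (P j (J φ)) = 0`. By minimality of the dilation these vectors span `M`.
-/

open scoped InnerProductSpace

namespace LinearMap

variable {𝕜 E : Type*} [RCLike 𝕜] [NormedAddCommGroup E] [InnerProductSpace 𝕜 E]

/-- Cauchy–Schwarz for the semi-inner product `(x, y) ↦ ⟪T x, y⟫` gives
`‖T x‖ ^ 4 ≤ re ⟪T x, x⟫ * re ⟪T (T x), T x⟫`. -/
theorem IsPositive.inner_right_eq_zero_iff {T : E →ₗ[𝕜] E} (hT : T.IsPositive) {x : E} :
    ⟪x, T x⟫_𝕜 = 0 ↔ T x = 0 := by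
  refine ⟨fun hx => ?_, fun hx => by rw [hx, inner_zero_right]⟩
  let c : PreInnerProductSpace.Core 𝕜 E :=
    { inner := fun x y => ⟪T x, y⟫_𝕜
      conj_inner_symm := fun x y => by simp [hT.isSymmetric x y]
      re_inner_nonneg := hT.re_inner_nonneg_left
      add_left := fun x y z => by simp [inner_add_left]
      smul_left := fun x y r => by simp [inner_smul_left] }
  have hcs := @InnerProductSpace.Core.inner_mul_inner_self_le 𝕜 E _ _ _ c x (T x)
  change ‖⟪T x, T x⟫_𝕜‖ * ‖⟪T (T x), x⟫_𝕜‖ ≤ RCLike.re ⟪T x, x⟫_𝕜 * _ at hcs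
  rwa [hT.isSymmetric (T x) x, hT.isSymmetric x x, hx, map_zero, zero_mul, ← sq, sq_nonpos_iff,
    norm_eq_zero, inner_self_eq_zero] at hcs

end LinearMap

theorem IsPosOp.isPositive {E : Type*} [NormedAddCommGroup E] [InnerProductSpace ℂ E]
    [FiniteDimensional ℂ E] {T : E →ₗ[ℂ] E} (hT : IsPosOp T) : T.IsPositive :=
  (T.isPositive_iff).mpr ⟨(T.isSymmetric_iff_isSelfAdjoint).mpr hT.1, hT.2⟩

section outer

variable {E F : Type*} [NormedAddCommGroup E] [InnerProductSpace ℂ E]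
  [NormedAddCommGroup F] [InnerProductSpace ℂ F]

theorem outer_eq_rankOne (x y : E) :
    outer x y = (InnerProductSpace.rankOne ℂ x y : E →ₗ[ℂ] E) := by
  ext z; simp [outer]

theorem trace_outer [FiniteDimensional ℂ E] (x y : E) :
    LinearMap.trace ℂ E (outer x y) = ⟪y, x⟫_ℂ := by
  rw [outer_eq_rankOne, InnerProductSpace.trace_rankOne]

theorem comp_outer_comp [FiniteDimensional ℂ E] [FiniteDimensional ℂ F]
    (K : E →ₗ[ℂ] F) (L : F →ₗ[ℂ] E) (x y : E) :
    K ∘ₗ outer x y ∘ₗ L = outer (K x) (LinearMap.adjoint L y) := by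
  ext z; simp [outer, LinearMap.adjoint_inner_left]

end outer

theorem trace_leastDisturbing_outer_comp {H M Ω : Type*}
    [NormedAddCommGroup H] [InnerProductSpace ℂ H] [FiniteDimensional ℂ H]
    [NormedAddCommGroup M] [InnerProductSpace ℂ M] [FiniteDimensional ℂ M] [Fintype Ω]
    (P : Ω → M →ₗ[ℂ] M) (J : H →ₗ[ℂ] M) (φ : H) (B : M →ₗ[ℂ] M) :
    LinearMap.trace ℂ M (leastDisturbing P J (outer φ φ) ∘ₗ B) =
      ∑ j, ⟪LinearMap.adjoint (P j) (J φ), B (P j (J φ))⟫_ℂ := by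
  rw [leastDisturbing, LinearMap.sum_apply, ← Module.End.mul_eq_comp, Finset.sum_mul, map_sum]
  refine Finset.sum_congr rfl fun j _ => ?_
  simp only [sandwich, LinearMap.coe_mk, AddHom.coe_mk, Module.End.mul_eq_comp,
    LinearMap.comp_assoc, comp_outer_comp, trace_outer]
  simp [LinearMap.adjoint_comp, LinearMap.adjoint_inner_left]

theorem stmt_4_general {H M : Type*}
    [NormedAddCommGroup H] [InnerProductSpace ℂ H] [FiniteDimensional ℂ H]
    [NormedAddCommGroup M] [InnerProductSpace ℂ M] [FiniteDimensional ℂ M]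
    {Ω : Type*} [Fintype Ω]
    (A : Ω → H →ₗ[ℂ] H) (P : Ω → M →ₗ[ℂ] M) (J : H →ₗ[ℂ] M)
    (hdil : IsMinimalNaimark A P J)
    (Λd : (M →ₗ[ℂ] M) →ₗ[ℂ] (H →ₗ[ℂ] H))
    (hΛd : IsHeisenbergDual (leastDisturbing P J) Λd)
    (B : M →ₗ[ℂ] M) (hB : IsPosOp B) (h0 : Λd B = 0) :
    B = 0 := by
  obtain ⟨⟨⟨hP, -⟩, -, -⟩, hspan⟩ := hdil
  have hBpos := hB.isPositive
  refine LinearMap.ext_on hspan ?_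
  rintro _ ⟨j, φ, rfl⟩
  have hsum : ∑ i, ⟪P i (J φ), B (P i (J φ))⟫_ℂ = 0 := by
    simpa [trace_leastDisturbing_outer_comp, h0, fun i => (hP i).1] using hΛd (outer φ φ) B
  have hj := (Finset.sum_eq_zero_iff_of_nonneg fun i _ => hBpos.inner_nonneg_right _).mp hsum j
    (Finset.mem_univ j)
  simpa using hBpos.inner_right_eq_zero_iff.mp hj

/-- If `(M, P, J)` is a minimal Naimark dilation of an observable `A` and
`Λ_A` is the associated least disturbing channel, then for positive semidefinite
`B ∈ L(M)`, `Λ_A*(B) = 0` implies `B = 0`. -/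
theorem stmt_4 {H M : Type*}
    [NormedAddCommGroup H] [InnerProductSpace ℂ H] [FiniteDimensional ℂ H]
    [NormedAddCommGroup M] [InnerProductSpace ℂ M] [FiniteDimensional ℂ M]
    {Ω : Type*} [Fintype Ω]
    (A : Ω → H →ₗ[ℂ] H) (P : Ω → M →ₗ[ℂ] M) (J : H →ₗ[ℂ] M)
    (hA : IsPOVM A) (hdil : IsMinimalNaimark A P J)
    (Λd : (M →ₗ[ℂ] M) →ₗ[ℂ] (H →ₗ[ℂ] H))
    (hΛd : IsHeisenbergDual (leastDisturbing P J) Λd)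
    (B : M →ₗ[ℂ] M) (hB : IsPosOp B) (h0 : Λd B = 0) :
    B = 0 :=
  stmt_4_general A P J hdil Λd hΛd B hB h0
end

section
/- Let A : Ω_A → L(H) be an observable on a finite-dimensional complex Hilbert space and (M, P, J) a minimal Naimark dilation of A, with least disturbing channel Λ_A(ρ) = ∑_{j∈Ω_A} P(j) J ρ J* P(j). Then the support projection of Λ_A is the identity: if R ∈ L(M) is an orthogonal projection with Λ_A*(R) = 1_H, then R = 1_M. -/
/-!
Put `x j = P j (J φ)`. Duality applied to `ρ = |φ⟩⟨φ|` turns `Λ*(R) = 1` into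
`∑ j, re ⟪x j, R (x j)⟫ = ‖φ‖²`, while `∑ j, ‖x j‖² = ‖J φ‖² = ‖φ‖²`. As
`‖x - R x‖² = ‖x‖² - re ⟪x, R x⟫` for an orthogonal projection `R`, this forces `R (x j) = x j`,
and the `x j` span `M` by minimality.
-/

open scoped ComplexOrder

open scoped InnerProductSpace

section Outer

variable {E F : Type*} [NormedAddCommGroup E] [InnerProductSpace ℂ E]
  [NormedAddCommGroup F] [InnerProductSpace ℂ F]

theorem trace_outer_comp [FiniteDimensional ℂ E] (x y : E) (T : E →ₗ[ℂ] E) :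
    LinearMap.trace ℂ E (outer x y ∘ₗ T) = ⟪y, T x⟫_ℂ := by
  rw [LinearMap.trace_comp_comm', ← trace_outer]
  congr 1
  ext z
  simp [outer]

theorem sandwich_outer [FiniteDimensional ℂ E] [FiniteDimensional ℂ F]
    (U : E →ₗ[ℂ] F) (V : F →ₗ[ℂ] E) (x y : E) :
    sandwich U V (outer x y) = outer (U x) (LinearMap.adjoint V y) := by
  ext z
  simp [sandwich, outer, LinearMap.adjoint_inner_left]

theorem IsHeisenbergDual.trace_comp_outer [FiniteDimensional ℂ E] [FiniteDimensional ℂ F]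
    {Λ : (E →ₗ[ℂ] E) →ₗ[ℂ] (F →ₗ[ℂ] F)} {Λd : (F →ₗ[ℂ] F) →ₗ[ℂ] (E →ₗ[ℂ] E)}
    (hΛd : IsHeisenbergDual Λ Λd) (φ : E) (B : F →ₗ[ℂ] F) :
    LinearMap.trace ℂ F (Λ (outer φ φ) ∘ₗ B) = ⟪φ, Λd B φ⟫_ℂ := by
  rw [hΛd, trace_outer_comp]

theorem leastDisturbing_outer [FiniteDimensional ℂ E] [FiniteDimensional ℂ F]
    {Ω : Type*} [Fintype Ω] {P : Ω → F →ₗ[ℂ] F} (hP : ∀ j, LinearMap.adjoint (P j) = P j)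
    (J : E →ₗ[ℂ] F) (x y : E) :
    leastDisturbing P J (outer x y) = ∑ j, outer (P j (J x)) (P j (J y)) := by
  simp [leastDisturbing, sandwich_outer, LinearMap.adjoint_comp, hP]

end Outer

section Operators

variable {E F : Type*} [NormedAddCommGroup E] [InnerProductSpace ℂ E] [FiniteDimensional ℂ E]
  [NormedAddCommGroup F] [InnerProductSpace ℂ F] [FiniteDimensional ℂ F]

theorem IsOrthoProj.inner_apply_apply {R : E →ₗ[ℂ] E} (hR : IsOrthoProj R) (x : E) :
    ⟪R x, R x⟫_ℂ = ⟪x, R x⟫_ℂ := by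
  rw [← LinearMap.adjoint_inner_right, hR.1, ← LinearMap.comp_apply, hR.2]

theorem IsOrthoProj.norm_sub_apply_sq {R : E →ₗ[ℂ] E} (hR : IsOrthoProj R) (x : E) :
    ‖x - R x‖ ^ 2 = ‖x‖ ^ 2 - RCLike.re ⟪x, R x⟫_ℂ := by
  rw [norm_sub_sq (𝕜 := ℂ), ← inner_self_eq_norm_sq (𝕜 := ℂ) (R x), hR.inner_apply_apply]
  ring

theorem IsOrthoProj.apply_eq_self_of_sum_re_inner_eq {R : E →ₗ[ℂ] E} (hR : IsOrthoProj R)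
    {ι : Type*} [Fintype ι] (x : ι → E)
    (h : ∑ i, RCLike.re ⟪x i, R (x i)⟫_ℂ = ∑ i, ‖x i‖ ^ 2) (i : ι) : R (x i) = x i := by
  have hsum : ∑ i, ‖x i - R (x i)‖ ^ 2 = 0 := by
    simp_rw [hR.norm_sub_apply_sq]
    rw [Finset.sum_sub_distrib, h, sub_self]
  have hi := (Finset.sum_eq_zero_iff_of_nonneg fun i _ => by positivity).mp hsum i
    (Finset.mem_univ i)
  rw [sq_eq_zero_iff, norm_eq_zero, sub_eq_zero] at hi
  exact hi.symm

theorem IsPVM.sum_norm_apply_sq {Ω : Type*} [Fintype Ω] {P : Ω → E →ₗ[ℂ] E} (hP : IsPVM P)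
    (x : E) : ∑ j, ‖P j x‖ ^ 2 = ‖x‖ ^ 2 := by
  calc ∑ j, ‖P j x‖ ^ 2 = ∑ j, RCLike.re ⟪x, P j x⟫_ℂ := by
        congr with j
        rw [← (hP.1 j).inner_apply_apply, inner_self_eq_norm_sq]
    _ = RCLike.re ⟪x, (∑ j, P j) x⟫_ℂ := by rw [LinearMap.sum_apply, inner_sum, map_sum]
    _ = ‖x‖ ^ 2 := by rw [hP.2, Module.End.one_apply, inner_self_eq_norm_sq]

theorem IsIsometryOp.inner_map_map {J : E →ₗ[ℂ] F} (hJ : IsIsometryOp J) (x y : E) :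
    ⟪J x, J y⟫_ℂ = ⟪x, y⟫_ℂ := by
  rw [← LinearMap.adjoint_inner_right, ← LinearMap.comp_apply, hJ, Module.End.one_apply]

end Operators

theorem stmt_5_general {H M : Type*}
    [NormedAddCommGroup H] [InnerProductSpace ℂ H] [FiniteDimensional ℂ H]
    [NormedAddCommGroup M] [InnerProductSpace ℂ M] [FiniteDimensional ℂ M]
    {Ω : Type*} [Fintype Ω]
    (A : Ω → H →ₗ[ℂ] H) (P : Ω → M →ₗ[ℂ] M) (J : H →ₗ[ℂ] M)
    (hdil : IsMinimalNaimark A P J)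
    (Λd : (M →ₗ[ℂ] M) →ₗ[ℂ] (H →ₗ[ℂ] H))
    (hΛd : IsHeisenbergDual (leastDisturbing P J) Λd)
    (R : M →ₗ[ℂ] M) (hR : IsOrthoProj R) (h1 : Λd R = (1 : H →ₗ[ℂ] H)) :
    R = (1 : M →ₗ[ℂ] M) := by
  obtain ⟨⟨hP, hJ, -⟩, hspan⟩ := hdil
  have hfix : ∀ φ j, R (P j (J φ)) = P j (J φ) := by
    intro φ
    refine hR.apply_eq_self_of_sum_re_inner_eq (fun j => P j (J φ)) ?_
    calc ∑ j, RCLike.re ⟪P j (J φ), R (P j (J φ))⟫_ℂ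
        = RCLike.re (LinearMap.trace ℂ M (leastDisturbing P J (outer φ φ) ∘ₗ R)) := by
          rw [leastDisturbing_outer (fun j => (hP.1 j).1), ← Module.End.mul_eq_comp,
            Finset.sum_mul, map_sum, map_sum]
          simp only [Module.End.mul_eq_comp, trace_outer_comp]
      _ = ‖J φ‖ ^ 2 := by
          rw [hΛd.trace_comp_outer, h1, Module.End.one_apply, ← hJ.inner_map_map,
            inner_self_eq_norm_sq]
      _ = ∑ j, ‖P j (J φ)‖ ^ 2 := (hP.sum_norm_apply_sq _).symm
  exact LinearMap.ext_on hspan fun _ ⟨j, φ, hx⟩ => hx ▸ hfix φ j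

/-- The support projection of the least disturbing channel obtained from a
minimal Naimark dilation is the identity: if `R` is an orthogonal projection with
`Λ_A*(R) = 1`, then `R = 1`. -/
theorem stmt_5 {H M : Type*}
    [NormedAddCommGroup H] [InnerProductSpace ℂ H] [FiniteDimensional ℂ H]
    [NormedAddCommGroup M] [InnerProductSpace ℂ M] [FiniteDimensional ℂ M]
    {Ω : Type*} [Fintype Ω]
    (A : Ω → H →ₗ[ℂ] H) (P : Ω → M →ₗ[ℂ] M) (J : H →ₗ[ℂ] M)
    (hA : IsPOVM A) (hdil : IsMinimalNaimark A P J)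
    (Λd : (M →ₗ[ℂ] M) →ₗ[ℂ] (H →ₗ[ℂ] H))
    (hΛd : IsHeisenbergDual (leastDisturbing P J) Λd)
    (R : M →ₗ[ℂ] M) (hR : IsOrthoProj R) (h1 : Λd R = (1 : H →ₗ[ℂ] H)) :
    R = (1 : M →ₗ[ℂ] M) :=
  stmt_5_general A P J hdil Λd hΛd R hR h1
end

section
/- Let P be an orthogonal projection and E an effect (0 ≤ E ≤ 1) on a complex Hilbert space. If PEP is an orthogonal projection, then P and E commute: PE = EP. -/
/-- On a complex Hilbert space, if `P` is an orthogonal projection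
(a self-adjoint idempotent), `E` is an effect (`0 ≤ E ≤ 1`), and `P E P` is an
orthogonal projection, then `P` and `E` commute. -/
theorem stmt_8 {H : Type*} [NormedAddCommGroup H] [InnerProductSpace ℂ H]
    [CompleteSpace H]
    (P E : H →L[ℂ] H)
    (hPsa : IsSelfAdjoint P) (hPidem : P * P = P)
    (hEpos : E.IsPositive) (hEle1 : ((1 : H →L[ℂ] H) - E).IsPositive)
    (hPEPsa : IsSelfAdjoint (P * E * P)) (hPEPidem : (P * E * P) * (P * E * P) = P * E * P) :
    P * E = E * P := by
  have hE0 : (0 : H →L[ℂ] H) ≤ E := (ContinuousLinearMap.nonneg_iff_isPositive E).mpr hEpos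
  have hE1 : E ≤ 1 := (ContinuousLinearMap.le_def E 1).mpr hEle1
  have hEsa : star E = E := hEpos.isSelfAdjoint
  have hPs : star P = P := hPsa
  have hPEPs : star (P * E * P) = P * E * P := hPEPsa
  have hEsq : E * E ≤ E := by
    simpa [pow_succ, pow_one] using
      CStarAlgebra.pow_antitone hE0 hE1 (by norm_num : (1 : ℕ) ≤ 2)
  set X : H →L[ℂ] H := E * P - P * E * P with hX
  have hPEPEP : P * E * P * E * P = P * E * P := by
    have := hPEPidem
    calc P * E * P * E * P = P * E * (P * P) * E * P := by rw [hPidem]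
    _ = (P * E * P) * (P * E * P) := by noncomm_ring
    _ = P * E * P := hPEPidem
  have hXX : star X * X = P * (E * E) * P - P * E * P := by
    have hstarX : star X = P * E - P * E * P := by
      simp [hX, star_sub, star_mul, hEsa, hPs, mul_assoc]
    rw [hstarX, hX]
    have h1 : (P * E - P * E * P) * (E * P - P * E * P)
        = P * E * E * P - P * E * (P * E * P) - P * E * P * E * P
          + P * E * P * (P * E * P) := by noncomm_ring
    rw [h1]
    have h2 : P * E * (P * E * P) = P * E * P * E * P := by noncomm_ring
    have h3 : P * E * P * (P * E * P) = P * E * (P * P) * E * P := by noncomm_ring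
    rw [h2, h3, hPidem, hPEPEP]
    noncomm_ring
  have hle : star X * X ≤ 0 := by
    rw [hXX, sub_nonpos]
    calc P * (E * E) * P = star P * (E * E) * P := by rw [hPs]
    _ ≤ star P * E * P := star_left_conjugate_le_conjugate hEsq P
    _ = P * E * P := by rw [hPs]
  have hX0 : X = 0 := by
    rw [← CStarRing.star_mul_self_eq_zero_iff X]
    exact le_antisymm hle (star_mul_self_nonneg X)
  have hEP : E * P = P * E * P := by rwa [hX, sub_eq_zero] at hX0
  have hPE : P * E = P * E * P := by
    calc P * E = star (E * P) := by rw [star_mul, hEsa, hPs]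
    _ = star (P * E * P) := by rw [hEP]
    _ = P * E * P := hPEPs
  rw [hPE, ← hEP]
end

section
/- Let A : Ω_A → L(H) be a non-vanishing observable (A(j) ≠ 0 for all j ∈ Ω_A) on a finite-dimensional complex Hilbert space with finite outcome set Ω_A. Then A is minimally sufficient if and only if every stochastic matrix p = (p(i|j))_{i,j∈Ω_A} satisfying A^p = A (that is, ∑_{j∈Ω_A} p(i|j) A(j) = A(i) for all i ∈ Ω_A) has p(i|j) = δ_{ij} for all i, j ∈ Ω_A. -/
open scoped ComplexOrder

/-! If `A = A^p` for a column-stochastic `p`, then for any strictly convex norm the triangle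
inequalities `‖A i‖ ≤ ∑ j, p i j * ‖A j‖`, summed over `i`, add up to an equality; so each is an
equality and `p i j > 0` puts `A i` and `A j` on a common ray. Merging two such outcomes gives an
observable equivalent to `A` of which `A` is not a relabeling, so minimal sufficiency forces
`p = 1`. Conversely, if `B = A^p` and `A = B^q`, then `A = A^(q p)`, so `q p = 1`, which makes
every column of `q` at an outcome with `B k ≠ 0` a unit vector: `A` is a relabeling of `B`. -/

section StochasticMatrix

variable {ι κ : Type*} [Fintype κ]

theorem Matrix.mul_apply_nonneg {q : Matrix ι κ ℝ} {p : Matrix κ ι ℝ}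
    (hq : ∀ i k, 0 ≤ q i k) (hp : ∀ k j, 0 ≤ p k j) (i j : ι) : 0 ≤ (q * p) i j :=
  Finset.sum_nonneg fun k _ => mul_nonneg (hq i k) (hp k j)

variable [Fintype ι]

theorem Matrix.sum_mul_apply_eq_one {q : Matrix ι κ ℝ} {p : Matrix κ ι ℝ}
    (hq : ∀ k, ∑ i, q i k = 1) (hp : ∀ j, ∑ k, p k j = 1) (j : ι) :
    ∑ i, (q * p) i j = 1 := by
  simp only [Matrix.mul_apply]
  rw [Finset.sum_comm]
  simp [← Finset.sum_mul, hq, hp]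

theorem Matrix.apply_eq_ite_of_mul_eq_one [DecidableEq ι] {q : Matrix ι κ ℝ} {p : Matrix κ ι ℝ}
    (hq0 : ∀ i k, 0 ≤ q i k) (hp0 : ∀ k j, 0 ≤ p k j) (hq1 : ∀ k, ∑ i, q i k = 1)
    (hqp : q * p = 1) {k : κ} {j : ι} (hpkj : 0 < p k j) (i : ι) :
    q i k = if i = j then 1 else 0 := by
  have hoff : ∀ i, i ≠ j → q i k = 0 := by
    intro i hij
    have hsum : ∑ k', q i k' * p k' j = 0 := by
      rw [← Matrix.mul_apply, hqp, Matrix.one_apply_ne hij]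
    have := (Finset.sum_eq_zero_iff_of_nonneg fun k' _ => mul_nonneg (hq0 i k') (hp0 k' j)).1
      hsum k (Finset.mem_univ k)
    exact (mul_eq_zero.1 this).resolve_right hpkj.ne'
  split_ifs with hij
  · subst hij
    rw [← hq1 k, Fintype.sum_eq_single i hoff]
  · exact hoff i hij

theorem Matrix.eq_one_of_apply_eq_zero_of_ne [DecidableEq ι] {p : Matrix ι ι ℝ}
    (hp1 : ∀ j, ∑ i, p i j = 1) (hp : ∀ i j, i ≠ j → p i j = 0) : p = 1 := by
  ext i j
  rcases eq_or_ne i j with rfl | hij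
  · rw [Matrix.one_apply_eq, ← hp1 i, Fintype.sum_eq_single i fun i' hi' => hp i' i hi']
  · rw [Matrix.one_apply_ne hij, hp i j hij]

theorem sum_smul_sum_smul_eq_mul {M ι' : Type*} [AddCommGroup M] [Module ℂ M]
    {A : ι → M} {B : κ → M} {p : Matrix κ ι ℝ} (q : Matrix ι' κ ℝ)
    (hB : ∀ k, B k = ∑ j, (p k j : ℂ) • A j) (i : ι') :
    ∑ k, (q i k : ℂ) • B k = ∑ j, ((q * p) i j : ℂ) • A j := by
  simp only [hB, Finset.smul_sum, smul_smul, Matrix.mul_apply, Complex.ofReal_sum,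
    Complex.ofReal_mul, Finset.sum_smul]
  exact Finset.sum_comm

end StochasticMatrix

section StrictConvex

variable {ι V : Type*} [NormedAddCommGroup V] [NormedSpace ℝ V] [StrictConvexSpace ℝ V]

theorem sameRay_sum_of_norm_sum_eq [DecidableEq ι] {s : Finset ι} {x : ι → V}
    (h : ‖∑ i ∈ s, x i‖ = ∑ i ∈ s, ‖x i‖) {k : ι} (hk : k ∈ s) :
    SameRay ℝ (x k) (∑ i ∈ s, x i) := by
  rw [← Finset.add_sum_erase s x hk] at h ⊢
  rw [← Finset.add_sum_erase s (‖x ·‖) hk] at h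
  have hsplit : ‖x k + ∑ i ∈ s.erase k, x i‖ = ‖x k‖ + ‖∑ i ∈ s.erase k, x i‖ := by
    refine le_antisymm (norm_add_le _ _) ?_
    rw [h]
    gcongr
    exact norm_sum_le _ _
  exact (SameRay.refl _).add_right (sameRay_iff_norm_add.2 hsplit)

theorem StrictConvexSpace.sameRay_of_eq_stochastic_sum [Fintype ι] {v : ι → V}
    {p : Matrix ι ι ℝ} (hp0 : ∀ i j, 0 ≤ p i j) (hp1 : ∀ j, ∑ i, p i j = 1)
    (hv : ∀ i, v i = ∑ j, p i j • v j) {i j : ι} (hpij : 0 < p i j) :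
    SameRay ℝ (v i) (v j) := by
  classical
  have hle : ∀ i, ‖v i‖ ≤ ∑ j, ‖p i j • v j‖ := fun i => (hv i).symm ▸ norm_sum_le _ _
  have htotal : ∑ i, ‖v i‖ = ∑ i, ∑ j, ‖p i j • v j‖ := by
    simp only [norm_smul, Real.norm_of_nonneg (hp0 _ _)]
    rw [Finset.sum_comm]
    simp [← Finset.sum_mul, hp1]
  have heq := (Finset.sum_eq_sum_iff_of_le fun i _ => hle i).1 htotal i (Finset.mem_univ i)
  have hray := sameRay_sum_of_norm_sum_eq (hv i ▸ heq) (Finset.mem_univ j)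
  rw [← hv i] at hray
  simpa [inv_smul_smul₀ hpij.ne'] using (hray.pos_smul_left (inv_pos.2 hpij)).symm

end StrictConvex

theorem sameRay_of_eq_stochastic_sum {ι M : Type*} [Fintype ι] [AddCommGroup M] [Module ℝ M]
    [FiniteDimensional ℝ M] {v : ι → M} {p : Matrix ι ι ℝ} (hp0 : ∀ i j, 0 ≤ p i j)
    (hp1 : ∀ j, ∑ i, p i j = 1) (hv : ∀ i, v i = ∑ j, p i j • v j) {i j : ι}
    (hpij : 0 < p i j) : SameRay ℝ (v i) (v j) := by
  let e := LinearEquiv.ofFinrankEq M (EuclideanSpace ℝ (Fin (Module.finrank ℝ M)))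
    finrank_euclideanSpace_fin.symm
  rw [← SameRay.sameRay_map_iff e]
  refine StrictConvexSpace.sameRay_of_eq_stochastic_sum (v := fun i => e (v i)) hp0 hp1
    (fun i => ?_) hpij
  rw [hv i, map_sum]
  simp only [map_smul]

theorem exists_nonneg_smul_sum_of_sameRay {ι M : Type*} [AddCommGroup M] [Module ℝ M]
    {s : Finset ι} {v : ι → M} {k : ι} (hk : k ∈ s) (hvk : v k ≠ 0)
    (hs : ∀ k' ∈ s, SameRay ℝ (v k) (v k')) : ∃ w : ℝ, 0 ≤ w ∧ v k = w • ∑ k' ∈ s, v k' := by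
  have hr : ∀ k', ∃ r : ℝ, 0 ≤ r ∧ (k' ∈ s → r • v k = v k') := fun k' => by
    by_cases hk' : k' ∈ s
    · obtain ⟨r, hr0, hr⟩ := (hs k' hk').exists_nonneg_left hvk
      exact ⟨r, hr0, fun _ => hr⟩
    · exact ⟨0, le_rfl, fun h => absurd h hk'⟩
  choose r hr0 hr using hr
  have hsum : ∑ k' ∈ s, v k' = (∑ k' ∈ s, r k') • v k := by
    rw [Finset.sum_smul]
    exact Finset.sum_congr rfl fun k' hk' => (hr k' hk').symm
  have hrk : 0 < r k := (hr0 k).lt_of_ne fun h0 => hvk (by rw [← hr k hk, ← h0, zero_smul])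
  have hpos : 0 < ∑ k' ∈ s, r k' :=
    hrk.trans_le (Finset.single_le_sum (fun k' _ => hr0 k') hk)
  exact ⟨(∑ k' ∈ s, r k')⁻¹, inv_nonneg.2 hpos.le, by rw [hsum, inv_smul_smul₀ hpos.ne']⟩

/-- Moves outcome sets into `Type`, where `MinSufficient` quantifies. -/
theorem exists_surjective_fin_fibers {α β : Type*} [Finite α] (g : α → β) :
    ∃ (m : ℕ) (g' : α → Fin m), Function.Surjective g' ∧ ∀ a b, g' a = g' b ↔ g a = g b :=
  ⟨_, Finite.equivFin (Set.range g) ∘ Set.rangeFactorization g,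
    (Finite.equivFin _).surjective.comp Set.rangeFactorization_surjective,
    fun _ _ => (Finite.equivFin _).apply_eq_iff_eq.trans Subtype.ext_iff⟩

section Relabel

variable {Ω Ω' Ω'' M : Type*} [Fintype Ω]

def relabel [AddCommMonoid M] [DecidableEq Ω'] (g : Ω → Ω') (A : Ω → M) (k : Ω') : M :=
  ∑ j ∈ Finset.univ.filter (fun j => g j = k), A j

theorem relabel_relabel [AddCommMonoid M] [Fintype Ω'] [DecidableEq Ω'] [DecidableEq Ω'']
    (f : Ω' → Ω'') (g : Ω → Ω') (A : Ω → M) :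
    relabel f (relabel g A) = relabel (f ∘ g) A := by
  ext k
  simp only [relabel]
  rw [← Finset.sum_fiberwise_of_maps_to (t := Finset.univ.filter fun l => f l = k) (g := g)
    fun j hj => by simpa using hj]
  refine Finset.sum_congr rfl fun l hl => ?_
  rw [Finset.filter_filter]
  refine Finset.sum_congr (Finset.filter_congr fun j _ => ?_) fun _ _ => rfl
  simp only [Finset.mem_filter, Finset.mem_univ, true_and] at hl
  exact ⟨fun hj => ⟨by simp [hj, hl], hj⟩, And.right⟩

theorem surjective_of_relabel_eq [AddCommMonoid M] [DecidableEq Ω] {f : Ω → Ω} {A : Ω → M}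
    (h : relabel f A = A) (hA : ∀ k, A k ≠ 0) : Function.Surjective f := by
  intro k
  by_contra! hk
  apply hA k
  rw [← h, relabel, Finset.filter_false_of_mem fun j _ => hk j, Finset.sum_empty]

variable {H : Type*} [NormedAddCommGroup H] [InnerProductSpace ℂ H] [FiniteDimensional ℂ H]
  [Fintype Ω'] [DecidableEq Ω']

theorem IsPOVM.relabel {A : Ω → H →ₗ[ℂ] H} (hA : IsPOVM A) (g : Ω → Ω') :
    IsPOVM (relabel g A) := by
  refine ⟨fun k => ⟨?_, fun x => ?_⟩, ?_⟩
  · simp only [_root_.relabel, map_sum, fun j => (hA.1 j).1]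
  · simp only [_root_.relabel, LinearMap.coe_sum, Finset.sum_apply, sum_inner]
    exact Finset.sum_nonneg fun j _ => (hA.1 j).2 x
  · rw [← hA.2]
    exact Finset.sum_fiberwise _ g A

theorem obsPP_relabel (g : Ω → Ω') (A : Ω → H →ₗ[ℂ] H) : ObsPP (relabel g A) A := by
  refine ⟨fun k j => if g j = k then 1 else 0, fun k j => by positivity, fun j => by simp,
    fun k => ?_⟩
  simp [relabel, Finset.sum_filter]

theorem obsPP_of_relabel {g : Ω → Ω'} (hg : Function.Surjective g) {A : Ω → H →ₗ[ℂ] H}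
    (hnv : ∀ j, A j ≠ 0) (hfib : ∀ k k', g k = g k' → SameRay ℝ (A k) (A k')) :
    ObsPP A (relabel g A) := by
  have hw : ∀ k, ∃ w : ℝ, 0 ≤ w ∧ A k = w • relabel g A (g k) := fun k =>
    exists_nonneg_smul_sum_of_sameRay (by simp) (hnv k)
      fun k' hk' => hfib k k' (Finset.mem_filter.1 hk').2.symm
  choose w hw0 hw using hw
  refine ⟨fun k l => if g k = l then w k else 0,
    fun k l => by dsimp only; split_ifs; exacts [hw0 k, le_rfl], fun l => ?_, fun k => ?_⟩
  · obtain ⟨k₀, rfl⟩ := hg l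
    have hB : relabel g A (g k₀) ≠ 0 := fun h0 => hnv k₀ (by rw [hw k₀, h0, smul_zero])
    refine smul_left_injective ℝ hB ?_
    simp only [one_smul, Finset.sum_ite, Finset.sum_const_zero, add_zero, Finset.sum_smul]
    conv_rhs => rw [relabel]
    exact Finset.sum_congr rfl fun k hk => by rw [← (Finset.mem_filter.1 hk).2, ← hw k]
  · simp [hw k]

end Relabel

section MinSufficient

variable {H : Type*} [NormedAddCommGroup H] [InnerProductSpace ℂ H] [FiniteDimensional ℂ H]
  {Ω : Type*} [Fintype Ω] [DecidableEq Ω] {A : Ω → H →ₗ[ℂ] H}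

theorem MinSufficient.injective_of_sameRay (hms : MinSufficient A) (hA : IsPOVM A)
    (hnv : ∀ j, A j ≠ 0) {Ω' : Type*} (g : Ω → Ω')
    (hfib : ∀ k k', g k = g k' → SameRay ℝ (A k) (A k')) : Function.Injective g := by
  obtain ⟨m, g', hg'surj, hg'fib⟩ := exists_surjective_fin_fibers g
  have hequiv : ObsEquiv (relabel g' A) A :=
    ⟨obsPP_relabel g' A, obsPP_of_relabel hg'surj hnv fun k k' h => hfib k k' ((hg'fib k k').1 h)⟩
  obtain ⟨f, hf⟩ := hms (Fin m) inferInstance _ (hA.relabel g') hequiv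
  have hfg : relabel (f ∘ g') A = A := by
    rw [← relabel_relabel]
    exact funext fun k => (hf k).symm
  have hinj := Finite.injective_iff_surjective.2 (surjective_of_relabel_eq hfg hnv)
  exact fun a b hab => hinj.of_comp ((hg'fib a b).2 hab)

theorem MinSufficient.eq_of_sameRay (hms : MinSufficient A) (hA : IsPOVM A)
    (hnv : ∀ j, A j ≠ 0) {i j : Ω} (h : SameRay ℝ (A i) (A j)) : i = j := by
  let g : Ω → Ω := fun k => if k = j then i else k
  have hfib : ∀ k k', g k = g k' → SameRay ℝ (A k) (A k') := by
    intro k k' hkk'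
    simp only [g] at hkk'
    split_ifs at hkk' <;> subst_vars
    exacts [SameRay.refl _, h.symm, h, SameRay.refl _]
  exact hms.injective_of_sameRay hA hnv g hfib (by simp [g])

theorem MinSufficient.eq_one_of_fixed (hms : MinSufficient A) (hA : IsPOVM A)
    (hnv : ∀ j, A j ≠ 0) {p : Matrix Ω Ω ℝ} (hp0 : ∀ i j, 0 ≤ p i j)
    (hp1 : ∀ j, ∑ i, p i j = 1) (hfix : ∀ i, A i = ∑ j, (p i j : ℂ) • A j) : p = 1 := by
  have hfixℝ : ∀ i, A i = ∑ j, p i j • A j := by simpa only [Complex.coe_smul] using hfix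
  refine Matrix.eq_one_of_apply_eq_zero_of_ne hp1 fun i j hij => ?_
  by_contra hpij
  exact hij (hms.eq_of_sameRay hA hnv
    (sameRay_of_eq_stochastic_sum hp0 hp1 hfixℝ ((hp0 i j).lt_of_ne' hpij)))

theorem minSufficient_of_forall_fixed_eq_one
    (h : ∀ p : Matrix Ω Ω ℝ, (∀ i j, 0 ≤ p i j) → (∀ j, ∑ i, p i j = 1) →
      (∀ i, A i = ∑ j, (p i j : ℂ) • A j) → p = 1) :
    MinSufficient A := by
  rintro Ω' _ B - ⟨⟨(p : Matrix Ω' Ω ℝ), hp0, hp1, hB⟩, ⟨(q : Matrix Ω Ω' ℝ), hq0, hq1, hA⟩⟩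
  have hqp : q * p = 1 :=
    h _ (Matrix.mul_apply_nonneg hq0 hp0) (Matrix.sum_mul_apply_eq_one hq1 hp1)
      fun i => (hA i).trans (sum_smul_sum_smul_eq_mul q hB i)
  have hcol : ∀ k, ∃ i, 0 < q i k := fun k => by
    by_contra! hk
    linarith [hq1 k, Finset.sum_nonpos fun i (_ : i ∈ Finset.univ) => hk i]
  choose f hf using hcol
  refine ⟨f, fun i => ?_⟩
  rw [hA i, Finset.sum_filter]
  refine Finset.sum_congr rfl fun k _ => ?_
  by_cases hBk : B k = 0
  · simp [hBk]
  obtain ⟨j, hj⟩ : ∃ j, 0 < p k j := by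
    by_contra! hp
    exact hBk (by simp [hB k, fun j => le_antisymm (hp j) (hp0 k j)])
  have hqk := Matrix.apply_eq_ite_of_mul_eq_one hq0 hp0 hq1 hqp hj
  have hfk : f k = j := by
    by_contra hne
    exact (hf k).ne' ((hqk (f k)).trans (if_neg hne))
  rw [hqk i, hfk]
  rcases eq_or_ne i j with rfl | hij
  · simp
  · simp [hij, hij.symm]

end MinSufficient

/-- A non-vanishing observable `A` is minimally sufficient iff every
stochastic matrix `p` with `A^p = A` is the identity matrix. -/
theorem stmt_9 {H : Type*}
    [NormedAddCommGroup H] [InnerProductSpace ℂ H] [FiniteDimensional ℂ H]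
    {Ω : Type*} [Fintype Ω] [DecidableEq Ω]
    (A : Ω → H →ₗ[ℂ] H) (hA : IsPOVM A) (hnv : ∀ j, A j ≠ 0) :
    MinSufficient A ↔
      ∀ p : Ω → Ω → ℝ, (∀ i j, 0 ≤ p i j) → (∀ j, ∑ i, p i j = 1) →
        (∀ i, A i = ∑ j, (p i j : ℂ) • A j) →
        ∀ i j, p i j = if i = j then 1 else 0 := by
  constructor
  · intro hms p hp0 hp1 hfix i j
    rw [hms.eq_one_of_fixed hA hnv hp0 hp1 hfix, Matrix.one_apply]
  · intro hfix
    refine minSufficient_of_forall_fixed_eq_one fun p hp0 hp1 hpA => ?_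
    ext i j
    rw [hfix p hp0 hp1 hpA, Matrix.one_apply]
end

section
/- Let A : Ω_A → L(H) be an observable on a finite-dimensional complex Hilbert space H with least disturbing channel Λ_A associated with a minimal Naimark dilation of A. A channel Φ : L(H) → L(K) is C_A-universal for A if and only if Φ is post-processing equivalent to Λ_A, i.e., Φ ∈ [Λ_A]. -/
open scoped ComplexOrder

/-!
With `T j = P j ∘ J` we have `A j = T j* T j`, and `Λ_A` is the Kraus map of the family `T`.
If `Λ` is compatible with `A`, the Kraus operators `V j i` of its `j`-th instrument element
satisfy `∑ i, V j i* V j i = T j* T j`, so `V j i = W j i ∘ T j` for operators `W j i` vanishing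
off `range (P j)`, which by minimality is `range (T j)`. Then `∑ j i, W j i* W j i = ∑ j, P j = 1`,
so the Kraus map of `W` is a channel `Γ` with `Λ = Γ ∘ Λ_A`: `Λ_A` is `C_A`-universal, and
universality is invariant under post-processing equivalence.
-/

theorem LinearMap.comp_sum {R M N L ι : Type*} [Semiring R] [AddCommMonoid M] [AddCommMonoid N]
    [AddCommMonoid L] [Module R M] [Module R N] [Module R L] (g : N →ₗ[R] L) (f : ι → M →ₗ[R] N)
    (s : Finset ι) : g ∘ₗ ∑ i ∈ s, f i = ∑ i ∈ s, g ∘ₗ f i := by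
  ext; simp

theorem LinearMap.sum_comp {R M N L ι : Type*} [Semiring R] [AddCommMonoid M] [AddCommMonoid N]
    [AddCommMonoid L] [Module R M] [Module R N] [Module R L] (f : ι → N →ₗ[R] L) (g : M →ₗ[R] N)
    (s : Finset ι) : (∑ i ∈ s, f i) ∘ₗ g = ∑ i ∈ s, f i ∘ₗ g := by
  ext; simp

section KrausMaps

open LinearMap

variable {E F G : Type*} [NormedAddCommGroup E] [InnerProductSpace ℂ E] [FiniteDimensional ℂ E]
  [NormedAddCommGroup F] [InnerProductSpace ℂ F] [FiniteDimensional ℂ F]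
  [NormedAddCommGroup G] [InnerProductSpace ℂ G] [FiniteDimensional ℂ G]
  {ι κ : Type*} [Fintype ι] [Fintype κ]

noncomputable def krausMap (V : ι → E →ₗ[ℂ] F) : (E →ₗ[ℂ] E) →ₗ[ℂ] (F →ₗ[ℂ] F) :=
  ∑ i, sandwich (V i) (adjoint (V i))

lemma krausMap_apply (V : ι → E →ₗ[ℂ] F) (ρ : E →ₗ[ℂ] E) :
    krausMap V ρ = ∑ i, V i ∘ₗ ρ ∘ₗ adjoint (V i) := by
  simp only [krausMap, LinearMap.sum_apply]
  rfl

lemma isCPMap_krausMap (V : ι → E →ₗ[ℂ] F) : IsCPMap (krausMap V) := by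
  refine ⟨Fintype.card ι, V ∘ (Fintype.equivFin ι).symm, fun ρ => ?_⟩
  rw [krausMap_apply]
  exact (Equiv.sum_comp (Fintype.equivFin ι).symm fun i => V i ∘ₗ ρ ∘ₗ adjoint (V i)).symm

lemma IsCPMap.exists_eq_krausMap {Λ : (E →ₗ[ℂ] E) →ₗ[ℂ] (F →ₗ[ℂ] F)} (hΛ : IsCPMap Λ) :
    ∃ (n : ℕ) (V : Fin n → E →ₗ[ℂ] F), Λ = krausMap V := by
  obtain ⟨n, V, hV⟩ := hΛ
  exact ⟨n, V, LinearMap.ext fun ρ => by rw [hV, krausMap_apply]⟩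

lemma trace_krausMap (V : ι → E →ₗ[ℂ] F) (ρ : E →ₗ[ℂ] E) :
    trace ℂ F (krausMap V ρ) = trace ℂ E (ρ ∘ₗ ∑ i, adjoint (V i) ∘ₗ V i) := by
  rw [krausMap_apply, map_sum, comp_sum, map_sum]
  refine Finset.sum_congr rfl fun i _ => ?_
  rw [← comp_assoc, trace_comp_comm', ← comp_assoc, trace_comp_comm']

lemma isChannel_krausMap {V : ι → E →ₗ[ℂ] F} (hV : ∑ i, adjoint (V i) ∘ₗ V i = 1) :
    IsChannel (krausMap V) :=
  ⟨isCPMap_krausMap V, fun ρ => by rw [trace_krausMap, hV, Module.End.one_eq_id, comp_id]⟩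

lemma krausMap_comp_krausMap (W : κ → F →ₗ[ℂ] G) (V : ι → E →ₗ[ℂ] F) :
    krausMap W ∘ₗ krausMap V = krausMap fun p : κ × ι => W p.1 ∘ₗ V p.2 := by
  ext ρ : 1
  simp only [comp_apply, krausMap_apply, Fintype.sum_prod_type, adjoint_comp, comp_sum, sum_comp,
    comp_assoc]

lemma IsCPMap.comp {Λ : (E →ₗ[ℂ] E) →ₗ[ℂ] (F →ₗ[ℂ] F)} {Γ : (F →ₗ[ℂ] F) →ₗ[ℂ] (G →ₗ[ℂ] G)}
    (hΓ : IsCPMap Γ) (hΛ : IsCPMap Λ) : IsCPMap (Γ ∘ₗ Λ) := by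
  obtain ⟨m, W, rfl⟩ := hΓ.exists_eq_krausMap
  obtain ⟨n, V, rfl⟩ := hΛ.exists_eq_krausMap
  rw [krausMap_comp_krausMap]
  exact isCPMap_krausMap _

lemma IsChannel.comp {Λ : (E →ₗ[ℂ] E) →ₗ[ℂ] (F →ₗ[ℂ] F)} {Γ : (F →ₗ[ℂ] F) →ₗ[ℂ] (G →ₗ[ℂ] G)}
    (hΓ : IsChannel Γ) (hΛ : IsChannel Λ) : IsChannel (Γ ∘ₗ Λ) :=
  ⟨hΓ.1.comp hΛ.1, fun ρ => by rw [comp_apply, hΓ.2, hΛ.2]⟩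

end KrausMaps

section Operators

open LinearMap

variable {E F G : Type*} [NormedAddCommGroup E] [InnerProductSpace ℂ E] [FiniteDimensional ℂ E]
  [NormedAddCommGroup F] [InnerProductSpace ℂ F] [FiniteDimensional ℂ F]
  [NormedAddCommGroup G] [InnerProductSpace ℂ G] [FiniteDimensional ℂ G]
  {ι : Type*} [Fintype ι]

lemma ext_of_trace_comp_eq {S T : E →ₗ[ℂ] E}
    (h : ∀ ρ : E →ₗ[ℂ] E, trace ℂ E (ρ ∘ₗ S) = trace ℂ E (ρ ∘ₗ T)) : S = T := by
  have key : ∀ (R : E →ₗ[ℂ] E) (x y : E),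
      trace ℂ E ((InnerProductSpace.rankOne ℂ x y : E →L[ℂ] E).toLinearMap ∘ₗ R) =
        inner ℂ y (R x) := by
    intro R x y
    have hR : R ∘ₗ (InnerProductSpace.rankOne ℂ x y : E →L[ℂ] E).toLinearMap =
        (InnerProductSpace.rankOne ℂ (R x) y : E →L[ℂ] E).toLinearMap := by
      ext z; simp
    rw [trace_comp_comm', hR, InnerProductSpace.trace_rankOne]
  ext x
  refine ext_inner_left ℂ fun y => ?_
  rw [← key, ← key, h]

lemma sum_adjoint_comp_self_eq_of_trace_krausMap {V : ι → E →ₗ[ℂ] F} {B : E →ₗ[ℂ] E}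
    (h : ∀ ρ, trace ℂ F (krausMap V ρ) = trace ℂ E (ρ ∘ₗ B)) :
    ∑ i, adjoint (V i) ∘ₗ V i = B :=
  ext_of_trace_comp_eq fun ρ => by rw [← trace_krausMap, h]

lemma sum_adjoint_comp_comp (W : ι → F →ₗ[ℂ] G) (T : E →ₗ[ℂ] F) :
    ∑ i, adjoint (W i ∘ₗ T) ∘ₗ (W i ∘ₗ T) = adjoint T ∘ₗ (∑ i, adjoint (W i) ∘ₗ W i) ∘ₗ T := by
  simp only [adjoint_comp, sum_comp, comp_sum, comp_assoc]

lemma sum_norm_sq_eq_of_sum_adjoint_comp_self_eq {V : ι → E →ₗ[ℂ] F} {T : E →ₗ[ℂ] G}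
    (h : ∑ i, adjoint (V i) ∘ₗ V i = adjoint T ∘ₗ T) (x : E) :
    ∑ i, ‖V i x‖ ^ 2 = ‖T x‖ ^ 2 := by
  have := congrArg (fun S : E →ₗ[ℂ] E => RCLike.re (inner ℂ x (S x))) h
  simpa only [LinearMap.sum_apply, inner_sum, map_sum, comp_apply, adjoint_inner_right,
    inner_self_eq_norm_sq] using this

lemma ker_le_ker_of_sum_adjoint_comp_self_eq {V : ι → E →ₗ[ℂ] F} {T : E →ₗ[ℂ] G}
    (h : ∑ i, adjoint (V i) ∘ₗ V i = adjoint T ∘ₗ T) (i : ι) : ker T ≤ ker (V i) := by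
  intro x hx
  have hsum := sum_norm_sq_eq_of_sum_adjoint_comp_self_eq h x
  rw [mem_ker.1 hx, norm_zero, zero_pow two_ne_zero,
    Finset.sum_eq_zero_iff_of_nonneg fun _ _ => sq_nonneg _] at hsum
  simpa using hsum i (Finset.mem_univ i)

lemma exists_comp_eq_of_ker_le {K V₁ V₂ V₃ : Type*} [Field K] [AddCommGroup V₁] [Module K V₁]
    [AddCommGroup V₂] [Module K V₂] [AddCommGroup V₃] [Module K V₃]
    {T : V₁ →ₗ[K] V₂} {V : V₁ →ₗ[K] V₃} (h : ker T ≤ ker V) : ∃ W : V₂ →ₗ[K] V₃, W ∘ₗ T = V := by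
  obtain ⟨W, hW⟩ := exists_extend ((ker T).liftQ V h ∘ₗ (quotKerEquivRange T).symm.toLinearMap)
  refine ⟨W, LinearMap.ext fun x => ?_⟩
  have := congr($hW ⟨T x, mem_range_self T x⟩)
  simpa [quotKerEquivRange_symm_apply_image] using this

lemma adjoint_comp_comp_eq_of_range_le {T : E →ₗ[ℂ] F} {R : G →ₗ[ℂ] F} {X : F →ₗ[ℂ] F}
    (hX : adjoint T ∘ₗ X ∘ₗ T = adjoint T ∘ₗ T) (hR : range R ≤ range T) :
    adjoint R ∘ₗ X ∘ₗ R = adjoint R ∘ₗ R := by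
  ext x
  refine ext_inner_left ℂ fun y => ?_
  obtain ⟨φ, hφ⟩ := hR (mem_range_self R y)
  obtain ⟨ψ, hψ⟩ := hR (mem_range_self R x)
  have := congr(inner ℂ φ ($hX ψ))
  simp only [comp_apply, adjoint_inner_right, hφ, hψ] at this ⊢
  exact this

end Operators

section Dilations

open LinearMap

variable {E F G : Type*} [NormedAddCommGroup E] [InnerProductSpace ℂ E] [FiniteDimensional ℂ E]
  [NormedAddCommGroup F] [InnerProductSpace ℂ F] [FiniteDimensional ℂ F]
  [NormedAddCommGroup G] [InnerProductSpace ℂ G] [FiniteDimensional ℂ G]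
  {ι Ω : Type*} [Fintype ι] [Fintype Ω]

lemma IsOrthoProj.adjoint_comp_self {Q : F →ₗ[ℂ] F} (hQ : IsOrthoProj Q) : adjoint Q ∘ₗ Q = Q := by
  rw [hQ.1, hQ.2]

lemma IsOrthoProj.comp_eq_of_range_le {Q : F →ₗ[ℂ] F} (hQ : IsOrthoProj Q) {V : Type*}
    [AddCommGroup V] [Module ℂ V] {T : V →ₗ[ℂ] F}
    (h : range T ≤ range Q) : Q ∘ₗ T = T := by
  ext x
  obtain ⟨y, hy⟩ := h (mem_range_self T x)
  rw [comp_apply, ← hy, ← comp_apply Q Q, hQ.2]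

lemma exists_comp_eq_of_sum_adjoint_comp_self_eq {T : E →ₗ[ℂ] F} {Q : F →ₗ[ℂ] F}
    (hQ : IsOrthoProj Q) (hTQ : range T = range Q) {V : ι → E →ₗ[ℂ] G}
    (hV : ∑ i, adjoint (V i) ∘ₗ V i = adjoint T ∘ₗ T) :
    ∃ W : ι → F →ₗ[ℂ] G,
      (∀ i, W i ∘ₗ T = V i) ∧ (∀ i, W i ∘ₗ Q = W i) ∧ ∑ i, adjoint (W i) ∘ₗ W i = Q := by
  choose W₀ hW₀ using fun i => exists_comp_eq_of_ker_le (ker_le_ker_of_sum_adjoint_comp_self_eq hV i)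
  have hX : adjoint T ∘ₗ (∑ i, adjoint (W₀ i) ∘ₗ W₀ i) ∘ₗ T = adjoint T ∘ₗ T := by
    rw [← sum_adjoint_comp_comp]
    simp only [hW₀, hV]
  refine ⟨fun i => W₀ i ∘ₗ Q, fun i => ?_, fun i => by rw [comp_assoc, hQ.2], ?_⟩
  · rw [comp_assoc, hQ.comp_eq_of_range_le hTQ.le, hW₀]
  · rw [sum_adjoint_comp_comp, adjoint_comp_comp_eq_of_range_le hX hTQ.ge, hQ.adjoint_comp_self]

variable {A : Ω → E →ₗ[ℂ] E} {P : Ω → F →ₗ[ℂ] F} {J : E →ₗ[ℂ] F}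

lemma IsPVM.sum_adjoint_comp_self (hP : IsPVM P) : ∑ j, adjoint (P j) ∘ₗ P j = 1 := by
  simp only [fun j => (hP.1 j).adjoint_comp_self, hP.2]

lemma IsPVM.comp_eq_zero (hP : IsPVM P) {j k : Ω} (hjk : j ≠ k) : P j ∘ₗ P k = 0 := by
  classical
  have h : ∑ i, adjoint (P i ∘ₗ P k) ∘ₗ (P i ∘ₗ P k) = adjoint (P k) ∘ₗ P k := by
    rw [sum_adjoint_comp_comp, hP.sum_adjoint_comp_self, Module.End.one_eq_id, id_comp]
  ext x
  have hsum := sum_norm_sq_eq_of_sum_adjoint_comp_self_eq h x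
  rw [← Finset.add_sum_erase _ _ (Finset.mem_univ k), comp_apply, ← comp_apply (P k) (P k),
    (hP.1 k).2, add_eq_left, Finset.sum_eq_zero_iff_of_nonneg fun _ _ => sq_nonneg _] at hsum
  simpa using hsum j (by simp [hjk])

lemma IsNaimark.adjoint_comp_self (hdil : IsNaimark A P J) (j : Ω) :
    adjoint (P j ∘ₗ J) ∘ₗ (P j ∘ₗ J) = A j := by
  rw [adjoint_comp, comp_assoc, ← comp_assoc J (P j), (hdil.1.1 j).adjoint_comp_self, hdil.2.2 j]

lemma leastDisturbing_eq_krausMap (hP : IsPVM P) :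
    leastDisturbing P J = krausMap fun j => P j ∘ₗ J := by
  simp only [leastDisturbing, krausMap, adjoint_comp, (hP.1 _).1]

lemma isChannel_leastDisturbing (hP : IsPVM P) (hJ : IsIsometryOp J) :
    IsChannel (leastDisturbing P J) := by
  rw [leastDisturbing_eq_krausMap hP]
  apply isChannel_krausMap
  rw [sum_adjoint_comp_comp, hP.sum_adjoint_comp_self, Module.End.one_eq_id, id_comp]
  exact hJ

lemma compatObsChan_krausMap {W : Ω → E →ₗ[ℂ] F} (hW : ∀ j, adjoint (W j) ∘ₗ W j = A j) :
    CompatObsChan A (krausMap W) :=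
  ⟨fun j => krausMap fun _ : Unit => W j, fun _ => isCPMap_krausMap _,
    fun j ρ => by rw [trace_krausMap, Fintype.sum_unique, hW], by simp [krausMap]⟩

lemma IsNaimark.compatObsChan_leastDisturbing (hdil : IsNaimark A P J) :
    CompatObsChan A (leastDisturbing P J) := by
  rw [leastDisturbing_eq_krausMap hdil.1]
  exact compatObsChan_krausMap hdil.adjoint_comp_self

lemma CompatObsChan.comp {Λ : (E →ₗ[ℂ] E) →ₗ[ℂ] (F →ₗ[ℂ] F)}
    {Γ : (F →ₗ[ℂ] F) →ₗ[ℂ] (G →ₗ[ℂ] G)} (hΛ : CompatObsChan A Λ) (hΓ : IsChannel Γ) :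
    CompatObsChan A (Γ ∘ₗ Λ) := by
  obtain ⟨I, hI, htr, rfl⟩ := hΛ
  exact ⟨fun j => Γ ∘ₗ I j, fun j => hΓ.1.comp (hI j), fun j ρ => by rw [comp_apply, hΓ.2, htr],
    (comp_sum Γ I _).symm⟩

lemma IsMinimalNaimark.range_comp (hdil : IsMinimalNaimark A P J) (j : Ω) :
    range (P j ∘ₗ J) = range (P j) := by
  refine le_antisymm (range_comp_le_range _ _) ?_
  rw [range_eq_map, ← hdil.2, Submodule.map_span, Submodule.span_le]
  rintro _ ⟨_, ⟨k, φ, rfl⟩, rfl⟩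
  by_cases hk : k = j
  · subst hk
    exact ⟨φ, by rw [← comp_apply (P k) (P k), (hdil.1.1.1 k).2, comp_apply]⟩
  · rw [← comp_apply (P j) (P k), hdil.1.1.comp_eq_zero (Ne.symm hk)]
    exact zero_mem _

end Dilations

section PostProcessing

open LinearMap

variable {E F G L : Type*} [NormedAddCommGroup E] [InnerProductSpace ℂ E] [FiniteDimensional ℂ E]
  [NormedAddCommGroup F] [InnerProductSpace ℂ F] [FiniteDimensional ℂ F]
  [NormedAddCommGroup G] [InnerProductSpace ℂ G] [FiniteDimensional ℂ G]
  [NormedAddCommGroup L] [InnerProductSpace ℂ L] [FiniteDimensional ℂ L]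

lemma ChanPP.trans {Λ₁ : (E →ₗ[ℂ] E) →ₗ[ℂ] (F →ₗ[ℂ] F)} {Λ₂ : (E →ₗ[ℂ] E) →ₗ[ℂ] (G →ₗ[ℂ] G)}
    {Λ₃ : (E →ₗ[ℂ] E) →ₗ[ℂ] (L →ₗ[ℂ] L)} (h₁₂ : ChanPP Λ₁ Λ₂) (h₂₃ : ChanPP Λ₂ Λ₃) :
    ChanPP Λ₁ Λ₃ := by
  obtain ⟨Γ₁, hΓ₁, rfl⟩ := h₁₂
  obtain ⟨Γ₂, hΓ₂, rfl⟩ := h₂₃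
  exact ⟨Γ₁ ∘ₗ Γ₂, hΓ₁.comp hΓ₂, (comp_assoc _ _ _).symm⟩

lemma isChannel_krausMap_linearIsometryEquiv (U : F ≃ₗᵢ[ℂ] G) :
    IsChannel (krausMap fun _ : Unit => U.toLinearEquiv.toLinearMap) := by
  apply isChannel_krausMap
  ext x
  simp [LinearIsometryEquiv.adjoint_toLinearMap_eq_symm]

lemma chanPP_krausMap_linearIsometryEquiv_comp (U : F ≃ₗᵢ[ℂ] G)
    (Λ : (E →ₗ[ℂ] E) →ₗ[ℂ] (F →ₗ[ℂ] F)) :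
    ChanPP Λ ((krausMap fun _ : Unit => U.toLinearEquiv.toLinearMap) ∘ₗ Λ) := by
  refine ⟨_, isChannel_krausMap_linearIsometryEquiv U.symm, ?_⟩
  rw [← comp_assoc, krausMap_comp_krausMap]
  ext ρ x
  simp [krausMap_apply]

variable {Ω : Type*} [Fintype Ω] {A : Ω → E →ₗ[ℂ] E} {P : Ω → F →ₗ[ℂ] F} {J : E →ₗ[ℂ] F}

theorem IsMinimalNaimark.chanPP_leastDisturbing (hdil : IsMinimalNaimark A P J)
    {Λ : (E →ₗ[ℂ] E) →ₗ[ℂ] (G →ₗ[ℂ] G)} (hΛ : CompatObsChan A Λ) :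
    ChanPP Λ (leastDisturbing P J) := by
  obtain ⟨I, hI, htr, rfl⟩ := hΛ
  have hP := hdil.1.1
  choose n V hV using fun j => (hI j).exists_eq_krausMap
  have hVA : ∀ j, ∑ i, adjoint (V j i) ∘ₗ V j i = adjoint (P j ∘ₗ J) ∘ₗ (P j ∘ₗ J) := by
    intro j
    rw [hdil.1.adjoint_comp_self]
    exact sum_adjoint_comp_self_eq_of_trace_krausMap fun ρ => by rw [← hV j, htr]
  choose W hWT hWP hWW using fun j =>
    exists_comp_eq_of_sum_adjoint_comp_self_eq (hP.1 j) (hdil.range_comp j) (hVA j)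
  have hcross : ∀ j i k, k ≠ j → W j i ∘ₗ (P k ∘ₗ J) = 0 := by
    intro j i k hk
    rw [← hWP j i, comp_assoc, ← comp_assoc J, hP.comp_eq_zero (Ne.symm hk), zero_comp, comp_zero]
  refine ⟨krausMap fun p : Σ j, Fin (n j) => W p.1 p.2, isChannel_krausMap ?_, ?_⟩
  · rw [Fintype.sum_sigma]
    simp only [hWW, hP.2]
  · rw [leastDisturbing_eq_krausMap hP, krausMap_comp_krausMap]
    ext ρ : 1
    rw [krausMap_apply, Fintype.sum_prod_type, Fintype.sum_sigma, LinearMap.sum_apply]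
    refine Finset.sum_congr rfl fun j _ => ?_
    rw [hV j, krausMap_apply]
    refine Finset.sum_congr rfl fun i _ => ?_
    rw [Finset.sum_eq_single j (fun k _ hk => by simp [hcross j i k hk]) (by simp), hWT]

end PostProcessing

theorem stmt_10_general {H M K : Type*}
    [NormedAddCommGroup H] [InnerProductSpace ℂ H] [FiniteDimensional ℂ H]
    [NormedAddCommGroup M] [InnerProductSpace ℂ M] [FiniteDimensional ℂ M]
    [NormedAddCommGroup K] [InnerProductSpace ℂ K] [FiniteDimensional ℂ K]
    {ΩA : Type*} [Fintype ΩA]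
    (A : ΩA → H →ₗ[ℂ] H)
    (P : ΩA → M →ₗ[ℂ] M) (J : H →ₗ[ℂ] M) (hdil : IsMinimalNaimark A P J)
    (Φ : (H →ₗ[ℂ] H) →ₗ[ℂ] (K →ₗ[ℂ] K)) :
    (CompatObsChan A Φ ∧
      ∀ (K' : Type) [NormedAddCommGroup K'] [InnerProductSpace ℂ K']
        [FiniteDimensional ℂ K'] (Λ : (H →ₗ[ℂ] H) →ₗ[ℂ] (K' →ₗ[ℂ] K')),
        IsChannel Λ → CompatObsChan A Λ →
        ∃ Λ' : (K →ₗ[ℂ] K) →ₗ[ℂ] (K' →ₗ[ℂ] K'), IsChannel Λ' ∧ Λ = Λ' ∘ₗ Φ) ↔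
    ChanEquiv Φ (leastDisturbing P J) := by
  have hLD : IsChannel (leastDisturbing P J) := isChannel_leastDisturbing hdil.1.1 hdil.1.2.1
  have hLDA : CompatObsChan A (leastDisturbing P J) := hdil.1.compatObsChan_leastDisturbing
  constructor
  · rintro ⟨hΦ, huniv⟩
    refine ⟨hdil.chanPP_leastDisturbing hΦ, ?_⟩
    -- `K'` ranges over `Type` only, so `Λ_A` is tested through a copy of `M` in `Type`.
    let U := (stdOrthonormalBasis ℂ M).repr
    have hU := isChannel_krausMap_linearIsometryEquiv U
    exact (chanPP_krausMap_linearIsometryEquiv_comp U _).trans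
      (huniv _ _ (hU.comp hLD) (hLDA.comp hU))
  · rintro ⟨⟨Γ, hΓ, rfl⟩, hLDΦ⟩
    exact ⟨hLDA.comp hΓ, fun K' _ _ _ Λ _ hΛ => (hdil.chanPP_leastDisturbing hΛ).trans hLDΦ⟩

/-- A channel `Φ` is `C_A`-universal for `A` iff `Φ ∈ [Λ_A]`. -/
theorem stmt_10 {H M K : Type*}
    [NormedAddCommGroup H] [InnerProductSpace ℂ H] [FiniteDimensional ℂ H]
    [NormedAddCommGroup M] [InnerProductSpace ℂ M] [FiniteDimensional ℂ M]
    [NormedAddCommGroup K] [InnerProductSpace ℂ K] [FiniteDimensional ℂ K]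
    {ΩA : Type*} [Fintype ΩA]
    (A : ΩA → H →ₗ[ℂ] H) (hA : IsPOVM A)
    (P : ΩA → M →ₗ[ℂ] M) (J : H →ₗ[ℂ] M) (hdil : IsMinimalNaimark A P J)
    (Φ : (H →ₗ[ℂ] H) →ₗ[ℂ] (K →ₗ[ℂ] K)) (hΦ : IsChannel Φ) :
    (CompatObsChan A Φ ∧
      ∀ (K' : Type) [NormedAddCommGroup K'] [InnerProductSpace ℂ K']
        [FiniteDimensional ℂ K'] (Λ : (H →ₗ[ℂ] H) →ₗ[ℂ] (K' →ₗ[ℂ] K')),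
        IsChannel Λ → CompatObsChan A Λ →
        ∃ Λ' : (K →ₗ[ℂ] K) →ₗ[ℂ] (K' →ₗ[ℂ] K'), IsChannel Λ' ∧ Λ = Λ' ∘ₗ Φ) ↔
    ChanEquiv Φ (leastDisturbing P J) :=
  stmt_10_general A P J hdil Φ
end

section
/- Let Λ : L(H) → L(K) be a channel between finite-dimensional complex Hilbert spaces, let (N, V) be a minimal Stinespring dilation of Λ and (N', V') any Stinespring dilation of Λ, with associated conjugate channels Λ^c(ρ) = tr_K[VρV*] and Λ̃^c(ρ) = tr_K[V'ρ(V')*]. If W : N → N' is an isometry with (1_K ⊗ W)V = V', then Φ ∘ Λ^c = Λ̃^c with Φ(σ) = WσW*, and ι ∘ Λ̃^c = Λ^c with ι(σ') = W*σ'W + tr[(1_{N'} − WW*)σ']·σ₀ for any fixed state σ₀ on N. In particular, any two conjugate channels of Λ are post-processing equivalent. -/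
open Matrix
open scoped Kronecker ComplexOrder

noncomputable section

/-- The sandwich map `ρ ↦ U * ρ * V` on matrices, as a linear map. -/
def mSand {a b : Type*} [Fintype a] [Fintype b]
    (U : Matrix b a ℂ) (V : Matrix a b ℂ) :
    Matrix a a ℂ →ₗ[ℂ] Matrix b b ℂ where
  toFun ρ := U * ρ * V
  map_add' ρ σ := by simp [Matrix.mul_add, Matrix.add_mul]
  map_smul' c ρ := by simp [Matrix.mul_smul, Matrix.smul_mul]

/-- A quantum channel on matrix algebras: a completely positive (here: admitting a
Kraus decomposition, which is equivalent in finite dimension) trace-preserving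
linear map. -/
def MIsChannel {a b : Type*} [Fintype a] [Fintype b]
    (Λ : Matrix a a ℂ →ₗ[ℂ] Matrix b b ℂ) : Prop :=
  (∃ (n : ℕ) (V : Fin n → Matrix b a ℂ), ∀ ρ, Λ ρ = ∑ i, V i * ρ * (V i)ᴴ) ∧
  ∀ ρ, (Λ ρ).trace = ρ.trace

/-- Channel post-processing: `Λ₀ ⪯ Λ` iff `Λ₀ = Γ ∘ Λ` for some channel `Γ`. -/
def MChanPP {a b c : Type*} [Fintype a] [Fintype b] [Fintype c]
    (Λ₀ : Matrix a a ℂ →ₗ[ℂ] Matrix c c ℂ) (Λ : Matrix a a ℂ →ₗ[ℂ] Matrix b b ℂ) : Prop :=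
  ∃ Γ : Matrix b b ℂ →ₗ[ℂ] Matrix c c ℂ, MIsChannel Γ ∧ Λ₀ = Γ ∘ₗ Λ

/-- Post-processing equivalence of channels. -/
def MChanEquiv {a b c : Type*} [Fintype a] [Fintype b] [Fintype c]
    (Λ₀ : Matrix a a ℂ →ₗ[ℂ] Matrix c c ℂ) (Λ : Matrix a a ℂ →ₗ[ℂ] Matrix b b ℂ) : Prop :=
  MChanPP Λ₀ Λ ∧ MChanPP Λ Λ₀

/-- A discrete observable (POVM) on a matrix algebra. -/
def MIsPOVM {a Ω : Type*} [Fintype a] [DecidableEq a] [Fintype Ω]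
    (A : Ω → Matrix a a ℂ) : Prop :=
  (∀ j, (A j).PosSemidef) ∧ ∑ j, A j = (1 : Matrix a a ℂ)

/-- A projection-valued measure on a matrix algebra. -/
def MIsPVM {a Ω : Type*} [Fintype a] [DecidableEq a] [Fintype Ω]
    (P : Ω → Matrix a a ℂ) : Prop :=
  (∀ j, (P j)ᴴ = P j ∧ P j * P j = P j) ∧ ∑ j, P j = (1 : Matrix a a ℂ)

/-- `(μ, P, J)` is a Naimark dilation of the observable `A`. -/
def MIsNaimark {ι μ Ω : Type*} [Fintype ι] [DecidableEq ι] [Fintype μ] [DecidableEq μ]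
    [Fintype Ω] (A : Ω → Matrix ι ι ℂ) (P : Ω → Matrix μ μ ℂ) (J : Matrix μ ι ℂ) : Prop :=
  MIsPVM P ∧ Jᴴ * J = (1 : Matrix ι ι ℂ) ∧ ∀ j, A j = Jᴴ * (P j * J)

/-- The least disturbing channel `ρ ↦ ∑ j, P j J ρ J* P j` of a Naimark dilation. -/
def mLeastDist {ι μ Ω : Type*} [Fintype ι] [Fintype μ] [Fintype Ω]
    (P : Ω → Matrix μ μ ℂ) (J : Matrix μ ι ℂ) :
    Matrix ι ι ℂ →ₗ[ℂ] Matrix μ μ ℂ :=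
  ∑ j, mSand (P j * J) (Jᴴ * P j)

/-- Partial trace over the first (left) tensor factor. -/
def ptraceLeft {a b : Type*} [Fintype a]
    (X : Matrix (a × b) (a × b) ℂ) : Matrix b b ℂ :=
  Matrix.of fun n n' => ∑ c : a, X (c, n) (c, n')

/-!
Conjugation by `1 ⊗ W` commutes with the partial trace over `K`, so `Λ̃ᶜ = W Λᶜ(·) W*`. As `W` is an
isometry, `W*(·)W` undoes this conjugation, while `1 - WW*` kills the range of `W`, so the extra
term `tr[(1 - WW*)σ] σ₀` vanishes on the image of `Λ̃ᶜ`; it only serves to make `ι` trace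
preserving. Writing `σ₀ = B*B`, the operators `B* E_{ji} (1 - WW*)` together with `W*` are Kraus
operators of `ι`.
-/

theorem ptraceLeft_one_kronecker_mul_mul {κ ν ν' : Type*} [Fintype κ] [DecidableEq κ]
    [Fintype ν] (A : Matrix ν' ν ℂ) (X : Matrix (κ × ν) (κ × ν) ℂ) (B : Matrix ν ν' ℂ) :
    ptraceLeft (((1 : Matrix κ κ ℂ) ⊗ₖ A) * X * ((1 : Matrix κ κ ℂ) ⊗ₖ B)) =
      A * ptraceLeft X * B := by
  ext n n'
  simp only [ptraceLeft, of_apply, Matrix.mul_apply, kroneckerMap_apply, Matrix.one_apply,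
    Fintype.sum_prod_type, ite_mul, mul_ite, one_mul, zero_mul, mul_zero, Finset.sum_ite_irrel,
    Finset.sum_const_zero, Finset.sum_ite_eq, Finset.sum_ite_eq', Finset.mem_univ, if_true,
    Finset.sum_mul, Finset.mul_sum]
  rw [Finset.sum_comm]
  exact Finset.sum_congr rfl fun _ _ => Finset.sum_comm

theorem sum_single_mul_mul_conjTranspose_single {a b : Type*} [Fintype a] [DecidableEq a]
    [Fintype b] [DecidableEq b] (M : Matrix a a ℂ) :
    ∑ p : b × a, single p.1 p.2 (1 : ℂ) * M * (single p.1 p.2 (1 : ℂ))ᴴ =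
      M.trace • (1 : Matrix b b ℂ) := by
  simp only [conjTranspose_single, star_one, single_mul_mul_single, one_mul, mul_one,
    Fintype.sum_prod_type]
  rw [← sum_single_one, Finset.smul_sum]
  simp only [smul_single, smul_eq_mul, mul_one, Matrix.trace, diag_apply]
  exact Finset.sum_congr rfl fun j _ => (map_sum (singleAddMonoidHom (α := ℂ) j j) _ _).symm

section Kraus

variable {a b c : Type*} [Fintype a]

def MHasKraus (Λ : Matrix a a ℂ →ₗ[ℂ] Matrix b b ℂ) : Prop :=
  ∃ (n : ℕ) (K : Fin n → Matrix b a ℂ), ∀ ρ, Λ ρ = ∑ i, K i * ρ * (K i)ᴴ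

theorem MHasKraus.of_fintype {τ : Type*} [Fintype τ] {Λ : Matrix a a ℂ →ₗ[ℂ] Matrix b b ℂ}
    (K : τ → Matrix b a ℂ) (hK : ∀ ρ, Λ ρ = ∑ t, K t * ρ * (K t)ᴴ) : MHasKraus Λ :=
  ⟨_, K ∘ (Fintype.equivFin τ).symm, fun ρ => (hK ρ).trans (Equiv.sum_comp _ _).symm⟩

theorem MHasKraus.add {Λ₁ Λ₂ : Matrix a a ℂ →ₗ[ℂ] Matrix b b ℂ}
    (h₁ : MHasKraus Λ₁) (h₂ : MHasKraus Λ₂) : MHasKraus (Λ₁ + Λ₂) := by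
  obtain ⟨n, K, hK⟩ := h₁
  obtain ⟨m, L, hL⟩ := h₂
  exact .of_fintype (Sum.elim K L) fun ρ => by simp [Fintype.sum_sum_type, hK, hL]

theorem MHasKraus.comp [Fintype b] {Λ₁ : Matrix a a ℂ →ₗ[ℂ] Matrix b b ℂ}
    {Λ₂ : Matrix b b ℂ →ₗ[ℂ] Matrix c c ℂ}
    (h₁ : MHasKraus Λ₁) (h₂ : MHasKraus Λ₂) : MHasKraus (Λ₂ ∘ₗ Λ₁) := by
  obtain ⟨n, K, hK⟩ := h₁
  obtain ⟨m, L, hL⟩ := h₂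
  refine .of_fintype (fun p : Fin n × Fin m => L p.2 * K p.1) fun ρ => ?_
  simp only [LinearMap.comp_apply, hK, hL, Matrix.mul_sum, Matrix.sum_mul, conjTranspose_mul,
    Matrix.mul_assoc, Fintype.sum_prod_type]
  exact Finset.sum_comm

theorem mHasKraus_mSand [Fintype b] (A : Matrix b a ℂ) : MHasKraus (mSand A Aᴴ) :=
  .of_fintype (fun _ : Unit => A) fun ρ => by simp [mSand]

def mTraceReplace (σ₀ : Matrix b b ℂ) : Matrix a a ℂ →ₗ[ℂ] Matrix b b ℂ :=
  (traceLinearMap a ℂ ℂ).smulRight σ₀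

@[simp]
theorem mTraceReplace_apply (σ₀ : Matrix b b ℂ) (ρ : Matrix a a ℂ) :
    mTraceReplace σ₀ ρ = ρ.trace • σ₀ :=
  rfl

open scoped MatrixOrder in
theorem mHasKraus_mTraceReplace [Fintype b] {σ₀ : Matrix b b ℂ} (hσ₀ : σ₀.PosSemidef) :
    MHasKraus (mTraceReplace (a := a) σ₀) := by
  classical
  obtain ⟨B, rfl⟩ := CStarAlgebra.nonneg_iff_eq_star_mul_self.mp hσ₀.nonneg
  refine .of_fintype (fun p : b × a => Bᴴ * single p.1 p.2 (1 : ℂ)) fun ρ => ?_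
  simp only [conjTranspose_mul, conjTranspose_conjTranspose, Matrix.mul_assoc]
  rw [← Matrix.mul_sum]
  simp only [← Matrix.mul_assoc]
  rw [← Matrix.sum_mul, sum_single_mul_mul_conjTranspose_single]
  simp [star_eq_conjTranspose]

end Kraus

section Isometry

variable {ν ν' : Type*} [Fintype ν] [DecidableEq ν] [Fintype ν'] {W : Matrix ν' ν ℂ}

theorem isIdempotentElem_mul_conjTranspose_of_isometry (hW : Wᴴ * W = 1) :
    IsIdempotentElem (W * Wᴴ) := by
  rw [IsIdempotentElem, Matrix.mul_assoc, ← Matrix.mul_assoc Wᴴ, hW, Matrix.one_mul]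

theorem one_sub_mul_conjTranspose_mul_of_isometry [DecidableEq ν'] (hW : Wᴴ * W = 1) :
    (1 - W * Wᴴ) * W = 0 := by
  rw [Matrix.sub_mul, Matrix.one_mul, Matrix.mul_assoc, hW, Matrix.mul_one, sub_self]

theorem mIsChannel_mSand_of_isometry (hW : Wᴴ * W = 1) : MIsChannel (mSand W Wᴴ) :=
  ⟨mHasKraus_mSand W, fun ρ => by
    change (W * ρ * Wᴴ).trace = ρ.trace
    rw [trace_mul_cycle, hW, Matrix.one_mul]⟩

/-- The map `ι` of the paper, written so that its Kraus decomposition is visible. -/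
def mRecovery [DecidableEq ν'] (W : Matrix ν' ν ℂ) (σ₀ : Matrix ν ν ℂ) :
    Matrix ν' ν' ℂ →ₗ[ℂ] Matrix ν ν ℂ :=
  mSand Wᴴ Wᴴᴴ + mTraceReplace σ₀ ∘ₗ mSand (1 - W * Wᴴ) (1 - W * Wᴴ)ᴴ

theorem mRecovery_apply [DecidableEq ν'] (hW : Wᴴ * W = 1) (σ₀ : Matrix ν ν ℂ)
    (σ : Matrix ν' ν' ℂ) :
    mRecovery W σ₀ σ = Wᴴ * σ * W + ((1 - W * Wᴴ) * σ).trace • σ₀ := by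
  have hP := (isIdempotentElem_mul_conjTranspose_of_isometry hW).one_sub
  have hPH : (1 - W * Wᴴ)ᴴ = 1 - W * Wᴴ := by simp
  simp only [mRecovery, mSand, LinearMap.add_apply, LinearMap.comp_apply, LinearMap.coe_mk,
    AddHom.coe_mk, mTraceReplace_apply, conjTranspose_conjTranspose, hPH]
  rw [trace_mul_cycle, hP.eq]

theorem mRecovery_apply_conj [DecidableEq ν'] (hW : Wᴴ * W = 1) (σ₀ T : Matrix ν ν ℂ) :
    mRecovery W σ₀ (W * T * Wᴴ) = T := by
  rw [mRecovery_apply hW, ← Matrix.mul_assoc (1 - W * Wᴴ), ← Matrix.mul_assoc (1 - W * Wᴴ),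
    one_sub_mul_conjTranspose_mul_of_isometry hW, Matrix.zero_mul, Matrix.zero_mul, trace_zero,
    zero_smul, add_zero, Matrix.mul_assoc, Matrix.mul_assoc, hW, Matrix.mul_one,
    ← Matrix.mul_assoc, hW, Matrix.one_mul]

theorem mIsChannel_mRecovery [DecidableEq ν'] (hW : Wᴴ * W = 1) {σ₀ : Matrix ν ν ℂ}
    (hσ₀ : σ₀.PosSemidef) (htr : σ₀.trace = 1) : MIsChannel (mRecovery W σ₀) := by
  refine ⟨(mHasKraus_mSand _).add ((mHasKraus_mSand _).comp (mHasKraus_mTraceReplace hσ₀)),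
    fun σ => ?_⟩
  rw [mRecovery_apply hW, trace_add, trace_smul, htr, smul_eq_mul, mul_one, trace_mul_cycle,
    Matrix.sub_mul, Matrix.one_mul, trace_sub, add_sub_cancel]

end Isometry

theorem stmt_16_general {ι κ ν ν' : Type*} [Fintype ι] [Fintype κ] [DecidableEq κ]
    [Fintype ν] [DecidableEq ν] [Fintype ν'] [DecidableEq ν']
    (V : Matrix (κ × ν) ι ℂ) (V' : Matrix (κ × ν') ι ℂ)
    (W : Matrix ν' ν ℂ) (hW : Wᴴ * W = (1 : Matrix ν ν ℂ))
    (hWV : ((1 : Matrix κ κ ℂ) ⊗ₖ W) * V = V')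
    (σ₀ : Matrix ν ν ℂ) (hσ₀pos : σ₀.PosSemidef) (hσ₀tr : σ₀.trace = 1) :
    (∀ ρ : Matrix ι ι ℂ,
      ptraceLeft (V' * ρ * V'ᴴ) = W * ptraceLeft (V * ρ * Vᴴ) * Wᴴ) ∧
    (∀ ρ : Matrix ι ι ℂ,
      ptraceLeft (V * ρ * Vᴴ) =
        Wᴴ * ptraceLeft (V' * ρ * V'ᴴ) * W +
        (((1 - W * Wᴴ) * ptraceLeft (V' * ρ * V'ᴴ)).trace) • σ₀) ∧
    (∃ Γ : Matrix ν ν ℂ →ₗ[ℂ] Matrix ν' ν' ℂ, MIsChannel Γ ∧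
      ∀ ρ : Matrix ι ι ℂ, ptraceLeft (V' * ρ * V'ᴴ) = Γ (ptraceLeft (V * ρ * Vᴴ))) ∧
    (∃ Γ' : Matrix ν' ν' ℂ →ₗ[ℂ] Matrix ν ν ℂ, MIsChannel Γ' ∧
      ∀ ρ : Matrix ι ι ℂ, ptraceLeft (V * ρ * Vᴴ) = Γ' (ptraceLeft (V' * ρ * V'ᴴ))) := by
  have hconj : ∀ ρ : Matrix ι ι ℂ,
      ptraceLeft (V' * ρ * V'ᴴ) = W * ptraceLeft (V * ρ * Vᴴ) * Wᴴ := fun ρ => by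
    rw [← ptraceLeft_one_kronecker_mul_mul, ← hWV, conjTranspose_mul, conjTranspose_kronecker,
      conjTranspose_one]
    simp only [Matrix.mul_assoc]
  have hrec : ∀ ρ : Matrix ι ι ℂ,
      ptraceLeft (V * ρ * Vᴴ) = mRecovery W σ₀ (ptraceLeft (V' * ρ * V'ᴴ)) := fun ρ => by
    rw [hconj, mRecovery_apply_conj hW]
  exact ⟨hconj, fun ρ => by rw [← mRecovery_apply hW, ← hrec],
    ⟨mSand W Wᴴ, mIsChannel_mSand_of_isometry hW, hconj⟩,
    ⟨mRecovery W σ₀, mIsChannel_mRecovery hW hσ₀pos hσ₀tr, hrec⟩⟩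

/-- Conjugate channels of a channel `Λ` arising from different Stinespring
dilations `(N, V)` (minimal) and `(N', V')`, related by an isometry `W` with
`(1 ⊗ W) V = V'`, satisfy `Φ ∘ Λᶜ = Λ̃ᶜ` and `ι ∘ Λ̃ᶜ = Λᶜ`; in particular the two
conjugate channels are post-processing equivalent. -/
theorem stmt_16 {ι κ ν ν' : Type*} [Fintype ι] [DecidableEq ι] [Fintype κ] [DecidableEq κ]
    [Fintype ν] [DecidableEq ν] [Fintype ν'] [DecidableEq ν']
    (Λ : Matrix ι ι ℂ →ₗ[ℂ] Matrix κ κ ℂ) (hΛ : MIsChannel Λ)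
    (Λd : Matrix κ κ ℂ →ₗ[ℂ] Matrix ι ι ℂ)
    (hΛd : ∀ (ρ : Matrix ι ι ℂ) (B : Matrix κ κ ℂ), (Λ ρ * B).trace = (ρ * Λd B).trace)
    (V : Matrix (κ × ν) ι ℂ) (hV : Vᴴ * V = (1 : Matrix ι ι ℂ))
    (hdil : ∀ B : Matrix κ κ ℂ, Λd B = Vᴴ * ((B ⊗ₖ (1 : Matrix ν ν ℂ)) * V))
    (hmin : Submodule.span ℂ {x : (κ × ν) → ℂ | ∃ (B : Matrix κ κ ℂ) (φ : ι → ℂ),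
      x = ((B ⊗ₖ (1 : Matrix ν ν ℂ)) * V).mulVec φ} = ⊤)
    (V' : Matrix (κ × ν') ι ℂ) (hV' : V'ᴴ * V' = (1 : Matrix ι ι ℂ))
    (hdil' : ∀ B : Matrix κ κ ℂ, Λd B = V'ᴴ * ((B ⊗ₖ (1 : Matrix ν' ν' ℂ)) * V'))
    (W : Matrix ν' ν ℂ) (hW : Wᴴ * W = (1 : Matrix ν ν ℂ))
    (hWV : ((1 : Matrix κ κ ℂ) ⊗ₖ W) * V = V')
    (σ₀ : Matrix ν ν ℂ) (hσ₀pos : σ₀.PosSemidef) (hσ₀tr : σ₀.trace = 1) :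
    (∀ ρ : Matrix ι ι ℂ,
      ptraceLeft (V' * ρ * V'ᴴ) = W * ptraceLeft (V * ρ * Vᴴ) * Wᴴ) ∧
    (∀ ρ : Matrix ι ι ℂ,
      ptraceLeft (V * ρ * Vᴴ) =
        Wᴴ * ptraceLeft (V' * ρ * V'ᴴ) * W +
        (((1 - W * Wᴴ) * ptraceLeft (V' * ρ * V'ᴴ)).trace) • σ₀) ∧
    (∃ Γ : Matrix ν ν ℂ →ₗ[ℂ] Matrix ν' ν' ℂ, MIsChannel Γ ∧
      ∀ ρ : Matrix ι ι ℂ, ptraceLeft (V' * ρ * V'ᴴ) = Γ (ptraceLeft (V * ρ * Vᴴ))) ∧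
    (∃ Γ' : Matrix ν' ν' ℂ →ₗ[ℂ] Matrix ν ν ℂ, MIsChannel Γ' ∧
      ∀ ρ : Matrix ι ι ℂ, ptraceLeft (V * ρ * Vᴴ) = Γ' (ptraceLeft (V' * ρ * V'ᴴ))) :=
  stmt_16_general V V' W hW hWV σ₀ hσ₀pos hσ₀tr
end
end
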